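/- arXiv:2602.17485 — 8 statements merged into one kernel-verified Lean document; each statement's English description precedes it below -/
import Mathlib

section
/- Let X be a Banach space and F ⊆ B_{X*} a weak* compact set that is c-norming for some c > 0. If there exist three distinct elements x₀*, x₁*, x₂* ∈ F such that ‖x₀* − (1/2)(x₁* + x₂*)‖ < c, then the evaluation operator T : X → C(F) is not surjective (i.e., F is not free). -/
/-!
Suppose `T` were onto. By Urysohn there is `g ∈ C(F)` with `‖g‖ ≤ 1`, `g(x₀*) = 1` and
`g(x₁*) = g(x₂*) = 0`; its preimage `x` has `‖x‖ ≤ M ‖g‖ < 1/c`. But then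
`1 = (x₀* − (x₁* + x₂*)/2)(x) ≤ ‖x₀* − (x₁* + x₂*)/2‖ ‖x‖ < c · (1/c) = 1`.
-/

open Set unitInterval

theorem CompletelyRegularSpace.exists_continuousMap_norm_le_one
    {Y : Type*} [TopologicalSpace Y] [CompletelyRegularSpace Y] [CompactSpace Y]
    {p : Y} {s : Set Y} (hs : IsClosed s) (hp : p ∉ s) :
    ∃ g : C(Y, ℝ), ‖g‖ ≤ 1 ∧ g p = 1 ∧ EqOn g 0 s := by
  obtain ⟨f, hf, hfp, hfs⟩ := CompletelyRegularSpace.completely_regular p s hs hp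
  refine ⟨⟨fun y ↦ σ (f y), continuous_subtype_val.comp (continuous_symm.comp hf)⟩, ?_, ?_, ?_⟩
  · refine (ContinuousMap.norm_le _ zero_le_one).2 fun y ↦ ?_
    rw [ContinuousMap.coe_mk, Real.norm_eq_abs, abs_le]
    exact ⟨by linarith [(σ (f y)).2.1], (σ (f y)).2.2⟩
  · simp [hfp]
  · intro y hy
    simp [hfs hy]

theorem ContinuousLinearMap.norm_apply_lt_one_of_norm_lt
    {E F : Type*} [SeminormedAddCommGroup E] [NormedSpace ℝ E]
    [SeminormedAddCommGroup F] [NormedSpace ℝ F]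
    {φ : E →L[ℝ] F} {x : E} {c : ℝ} (hφ : ‖φ‖ < c) (hx : ‖x‖ < c⁻¹) : ‖φ x‖ < 1 := by
  have hc : 0 < c := (norm_nonneg φ).trans_lt hφ
  calc ‖φ x‖ ≤ ‖φ‖ * ‖x‖ := φ.le_opNorm x
    _ < c * c⁻¹ := mul_lt_mul'' hφ hx (norm_nonneg φ) (norm_nonneg x)
    _ = 1 := mul_inv_cancel₀ hc.ne'

theorem stmt1_general
    (X : Type*) [NormedAddCommGroup X] [NormedSpace ℝ X]
    (F : Set (WeakDual ℝ X)) [CompactSpace F]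
    (T : X →L[ℝ] C(F, ℝ))
    (hT : ∀ (x : X) (f : F), T x f = (f : WeakDual ℝ X) x)
    (c : ℝ)
    (hinv : ∃ M : ℝ, M < 1 / c ∧ ∀ x : X, ‖x‖ ≤ M * ‖T x‖)
    (x₀ x₁ x₂ : WeakDual ℝ X)
    (h₀ : x₀ ∈ F) (h₁ : x₁ ∈ F) (h₂ : x₂ ∈ F)
    (hne01 : x₀ ≠ x₁) (hne02 : x₀ ≠ x₂)
    (htriple : ‖WeakDual.toStrongDual (x₀ - (1 / 2 : ℝ) • (x₁ + x₂))‖ < c) :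
    ¬ Function.Surjective T := by
  intro hsurj
  obtain ⟨M, hM, hMx⟩ := hinv
  have hc : 0 < c := (norm_nonneg _).trans_lt htriple
  have hp₀ : (⟨x₀, h₀⟩ : F) ∉ ({⟨x₁, h₁⟩, ⟨x₂, h₂⟩} : Set F) := by
    simp [hne01, hne02]
  obtain ⟨g, hg, hg₀, hg₁₂⟩ :=
    CompletelyRegularSpace.exists_continuousMap_norm_le_one (Set.toFinite _).isClosed hp₀
  obtain ⟨x, rfl⟩ := hsurj g
  have hx : ‖x‖ < c⁻¹ := by
    rw [← one_div]
    calc ‖x‖ ≤ M * ‖T x‖ := hMx x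
      _ ≤ max M 0 * 1 := mul_le_mul (le_max_left M 0) hg (norm_nonneg _) (le_max_right M 0)
      _ < 1 / c := by rw [mul_one]; exact max_lt hM (by positivity)
  have hφx : WeakDual.toStrongDual (x₀ - (1 / 2 : ℝ) • (x₁ + x₂)) x = 1 := by
    have h₀x : x₀ x = 1 := by rw [← hT x ⟨x₀, h₀⟩, hg₀]
    have h₁x : x₁ x = 0 := by rw [← hT x ⟨x₁, h₁⟩, hg₁₂ (by simp)]; rfl
    have h₂x : x₂ x = 0 := by rw [← hT x ⟨x₂, h₂⟩, hg₁₂ (by simp)]; rfl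
    change x₀ x - (1 / 2 : ℝ) * (x₁ x + x₂ x) = 1
    rw [h₀x, h₁x, h₂x]
    norm_num
  have := ContinuousLinearMap.norm_apply_lt_one_of_norm_lt htriple hx
  rw [hφx, norm_one] at this
  exact this.false

/-- If `F ⊆ B_{X*}` is weak* compact and `c`-norming and contains a
"forbidden `c`-triple", i.e. distinct `x₀*, x₁*, x₂* ∈ F` with
`‖x₀* − (1/2)(x₁* + x₂*)‖ < c`, then the evaluation operator `T : X → C(F)` is not
surjective (`F` is not free). -/
theorem stmt1
    (X : Type*) [NormedAddCommGroup X] [NormedSpace ℝ X]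
    (F : Set (WeakDual ℝ X)) [CompactSpace F]
    (hFball : ∀ f ∈ F, ‖WeakDual.toStrongDual f‖ ≤ 1)
    (T : X →L[ℝ] C(F, ℝ))
    (hT : ∀ (x : X) (f : F), T x f = (f : WeakDual ℝ X) x)
    (c : ℝ) (hc0 : 0 < c)
    (hinj : Function.Injective T)
    (hclosed : IsClosed (Set.range T))
    (hinv : ∃ M : ℝ, M < 1 / c ∧ ∀ x : X, ‖x‖ ≤ M * ‖T x‖)
    (x₀ x₁ x₂ : WeakDual ℝ X)
    (h₀ : x₀ ∈ F) (h₁ : x₁ ∈ F) (h₂ : x₂ ∈ F)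
    (hne01 : x₀ ≠ x₁) (hne02 : x₀ ≠ x₂) (hne12 : x₁ ≠ x₂)
    (htriple : ‖WeakDual.toStrongDual (x₀ - (1 / 2 : ℝ) • (x₁ + x₂))‖ < c) :
    ¬ Function.Surjective T :=
  stmt1_general X F T hT c hinv x₀ x₁ x₂ h₀ h₁ h₂ hne01 hne02 htriple
end

section
/- Let (μₙ) be a uniformly bounded sequence in ℓ¹ (viewed as finitely additive measures on P(ω) via μ(B) = Σ_{n∈B} x(n)). Then for every infinite set S ⊆ ω there exist infinite subsets N, T ⊆ S such that the subsequence (μ_k)_{k∈N}, restricted to subsets of T, converges in the variation norm, i.e., Σ_{j∈T} |μ_k(j) − μ_m(j)| → 0 as k, m → ∞ along N. -/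
open Filter
open Topology

private lemma tail_tendsto (h : ℕ → ℝ) (hs : Summable h) :
    Tendsto (fun n => ∑' l, h (l + n)) atTop (𝓝 0) := by
  have h1 : ∀ n : ℕ, ∑' l, h (l + n) = (∑' l, h l) - ∑ l ∈ Finset.range n, h l := by
    intro n
    rw [eq_sub_iff_add_eq, add_comm]
    exact Summable.sum_add_tsum_nat_add n hs
  rw [funext h1]
  simpa using (tendsto_const_nhds (x := ∑' l, h l)).sub hs.hasSum.tendsto_sum_nat

/-- For a uniformly bounded sequence `(μₙ)` in `ℓ¹` (viewed as finitely additive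
measures on `𝒫(ω)`) and every infinite `S ⊆ ω`, there are infinite subsets `N, T ⊆ S` such that
the subsequence `(μ_k)_{k ∈ N}` converges in variation norm on `T`, i.e.
`Σ_{j∈T} |μ_k(j) − μ_m(j)| → 0` as `k, m → ∞` along `N`. -/
theorem stmt2
    (μ : ℕ → ℕ → ℝ)
    (hsum : ∀ n, Summable fun j => |μ n j|)
    (C : ℝ) (hbound : ∀ n, ∑' j, |μ n j| ≤ C)
    (S : Set ℕ) (hS : S.Infinite) :
    ∃ N T : Set ℕ, N ⊆ S ∧ T ⊆ S ∧ N.Infinite ∧ T.Infinite ∧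
      ∀ ε > (0 : ℝ), ∃ n₀ : ℕ, ∀ k ∈ N, ∀ m ∈ N, n₀ ≤ k → n₀ ≤ m →
        (∑' j : T, |μ k j - μ m j|) < ε := by
  classical
  have habs : ∀ n j, |μ n j| ≤ C := fun n j =>
    le_trans (Summable.le_tsum (hsum n) j fun _ _ => abs_nonneg _) (hbound n)
  -- enumerate S
  set e : ℕ → ℕ := Nat.nth (· ∈ S) with he
  have heS : ∀ i, e i ∈ S := fun i => Nat.nth_mem_of_infinite hS i
  have hemono : StrictMono e := Nat.nth_strictMono hS
  -- pointwise convergent subsequence via compactness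
  have hmem : ∀ i, (fun j => μ (e i) j) ∈ Set.univ.pi fun _ : ℕ => Set.Icc (-C) C := by
    intro i j _
    exact abs_le.mp (habs (e i) j)
  obtain ⟨a, -, φ, hφ, hconv⟩ :=
    (isCompact_univ_pi fun _ : ℕ => isCompact_Icc).tendsto_subseq hmem
  set g : ℕ → ℕ → ℝ := fun i => μ (e (φ i)) with hg
  have ha : ∀ j, Tendsto (fun i => g i j) atTop (𝓝 (a j)) := fun j =>
    tendsto_pi_nhds.1 hconv j
  -- the limit is absolutely summable (Fatou)
  have haabs : Summable fun j => |a j| := by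
    refine summable_of_sum_le (c := C) (fun j => abs_nonneg _) (fun F => ?_)
    have hT : Tendsto (fun i => ∑ j ∈ F, |g i j|) atTop (𝓝 (∑ j ∈ F, |a j|)) :=
      tendsto_finset_sum _ fun j _ => (ha j).abs
    refine le_of_tendsto hT (Eventually.of_forall fun i => ?_)
    exact le_trans (Summable.sum_le_tsum F (fun _ _ => abs_nonneg _) (hsum _)) (hbound _)
  have hsub : ∀ p, Summable fun j => |g p j - a j| := fun p =>
    ((hsum _).of_abs.sub haabs.of_abs).abs
  -- the recursive step
  have hstep : ∀ (i : ℕ) (s : ℕ × ℕ), ∃ s' : ℕ × ℕ,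
      s.1 < s'.1 ∧ s.2 < s'.2 ∧ s'.2 ∈ S ∧
      (∀ j ≤ s.2, |g s'.1 j - a j| ≤ (1/2) ^ i / (i + 1)) ∧
      (∑' l, |g s'.1 (l + s'.2) - a (l + s'.2)| ≤ (1/2) ^ i) := by
    intro i s
    have hδ : (0:ℝ) < (1/2) ^ i / (i + 1) := by positivity
    have hev : ∀ᶠ p in atTop, ∀ j ∈ Finset.Iic s.2, |g p j - a j| ≤ (1/2) ^ i / (i + 1) := by
      rw [eventually_all_finset]
      intro j _
      have h0 : Tendsto (fun p => |g p j - a j|) atTop (𝓝 |a j - a j|) :=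
        ((ha j).sub_const (a j)).abs
      rw [sub_self, abs_zero] at h0
      exact (h0.eventually_lt_const hδ).mono fun p hp => le_of_lt hp
    obtain ⟨p, hp1, hp2⟩ := ((eventually_gt_atTop s.1).and hev).exists
    have htail := (tail_tendsto _ (hsub p)).eventually_lt_const (show (0:ℝ) < (1/2)^i by positivity)
    obtain ⟨M, hM⟩ := eventually_atTop.1 htail
    obtain ⟨t, htS, htgt⟩ := hS.exists_gt (max s.2 M)
    refine ⟨(p, t), hp1, lt_of_le_of_lt (le_max_left _ _) htgt, htS, ?_, ?_⟩
    · intro j hj; exact hp2 j (Finset.mem_Iic.2 hj)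
    · exact le_of_lt (hM t (le_of_lt (lt_of_le_of_lt (le_max_right _ _) htgt)))
  choose step hs1 hs2 hs3 hs4 hs5 using hstep
  set f : ℕ → ℕ × ℕ := fun i => Nat.rec ((0, 0) : ℕ × ℕ) (fun i s => step i s) i with hfdef
  have hf : ∀ i, f (i + 1) = step i (f i) := fun i => rfl
  set p : ℕ → ℕ := fun i => (f (i + 1)).1 with hpdef
  set t : ℕ → ℕ := fun i => (f (i + 1)).2 with htdef
  have hf2mono : StrictMono fun i => (f i).2 :=
    strictMono_nat_of_lt_succ fun i => by rw [hf i]; exact hs2 i (f i)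
  have hf1mono : StrictMono fun i => (f i).1 :=
    strictMono_nat_of_lt_succ fun i => by rw [hf i]; exact hs1 i (f i)
  have htmono : StrictMono t := fun i j hij => hf2mono (Nat.succ_lt_succ hij)
  have hpmono : StrictMono p := fun i j hij => hf1mono (Nat.succ_lt_succ hij)
  have htS : ∀ i, t i ∈ S := fun i => by rw [htdef]; simp only [hf i]; exact hs3 i (f i)
  -- key estimate
  have hkey : ∀ i, ∑' l, |g (p i) (t l) - a (t l)| ≤ 2 * (1/2) ^ i := by
    intro i
    set h : ℕ → ℝ := fun j => |g (p i) j - a j| with hhdef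
    have hh : Summable h := hsub (p i)
    have hht : Summable fun l => h (t l) := hh.comp_injective htmono.injective
    have hsplit : ∑' l, h (t l)
        = ∑ l ∈ Finset.range i, h (t l) + ∑' l, h (t (l + i)) :=
      (Summable.sum_add_tsum_nat_add i hht).symm
    have hb1 : ∑ l ∈ Finset.range i, h (t l) ≤ (1/2) ^ i := by
      have hterm : ∀ l ∈ Finset.range i, h (t l) ≤ (1/2) ^ i / (i + 1) := by
        intro l hl
        have hl' : l < i := Finset.mem_range.1 hl
        have h1 : t l ≤ (f i).2 := by
          have := hf2mono.monotone (show l + 1 ≤ i from hl')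
          exact this
        have := hs4 i (f i) (t l) h1
        rw [← hf i] at this
        exact this
      have hcard := Finset.sum_le_card_nsmul (Finset.range i) (fun l => h (t l))
        ((1/2 : ℝ) ^ i / ((i : ℝ) + 1)) hterm
      rw [Finset.card_range, nsmul_eq_mul] at hcard
      refine le_trans hcard ?_
      have hc0 : (0:ℝ) ≤ (1/2 : ℝ) ^ i := by positivity
      rw [mul_div_assoc', div_le_iff₀ (by positivity : (0:ℝ) < (i : ℝ) + 1)]
      nlinarith
    have hb2 : ∑' l, h (t (l + i)) ≤ (1/2) ^ i := by
      have htail : ∑' l, h (l + t i) ≤ (1/2) ^ i := by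
        have := hs5 i (f i)
        rw [← hf i] at this
        exact this
      refine le_trans ?_ htail
      have hinj : Function.Injective fun l => t (l + i) - t i := by
        intro l l' hll
        have h1 : t i ≤ t (l + i) := htmono.monotone (Nat.le_add_left i l)
        have h2 : t i ≤ t (l' + i) := htmono.monotone (Nat.le_add_left i l')
        simp only at hll
        have : t (l + i) = t (l' + i) := by omega
        have := htmono.injective this
        omega
      refine Summable.tsum_le_tsum_of_inj (fun l => t (l + i) - t i) hinj
        (fun c _ => abs_nonneg _) (fun l => ?_) ?_ ?_
      · have h1 : t i ≤ t (l + i) := htmono.monotone (Nat.le_add_left i l)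
        have : t (l + i) - t i + t i = t (l + i) := by omega
        rw [this]
      · exact hh.comp_injective (fun l l' h => by
          have := htmono.injective h; omega)
      · exact hh.comp_injective (fun l l' h => by omega)
    rw [hsplit]; linarith
  -- assemble
  set q : ℕ → ℕ := fun i => e (φ (p i)) with hqdef
  have hqmono : StrictMono q := hemono.comp (hφ.comp hpmono)
  refine ⟨Set.range q, Set.range t, ?_, ?_, ?_, ?_, ?_⟩
  · rintro k ⟨i, rfl⟩; exact heS _
  · rintro k ⟨i, rfl⟩; exact htS i
  · exact Set.infinite_range_of_injective hqmono.injective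
  · exact Set.infinite_range_of_injective htmono.injective
  · intro ε hε
    obtain ⟨i₀, hi₀⟩ := exists_pow_lt_of_lt_one (show (0:ℝ) < ε/4 by linarith)
      (show (1:ℝ)/2 < 1 by norm_num)
    refine ⟨q i₀, ?_⟩
    rintro k ⟨i, rfl⟩ m ⟨i', rfl⟩ hk hm
    have hii : i₀ ≤ i := hqmono.le_iff_le.1 hk
    have hii' : i₀ ≤ i' := hqmono.le_iff_le.1 hm
    have hrange : (∑' j : Set.range t, |μ (q i) j - μ (q i') j|)
        = ∑' l, |μ (q i) (t l) - μ (q i') (t l)| :=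
      tsum_range (fun j => |μ (q i) j - μ (q i') j|) htmono.injective
    rw [hrange]
    have hsum1 : Summable fun l => |g (p i) (t l) - a (t l)| :=
      (hsub (p i)).comp_injective htmono.injective
    have hsum2 : Summable fun l => |g (p i') (t l) - a (t l)| :=
      (hsub (p i')).comp_injective htmono.injective
    have hle : ∑' l, |μ (q i) (t l) - μ (q i') (t l)|
        ≤ ∑' l, (|g (p i) (t l) - a (t l)| + |g (p i') (t l) - a (t l)|) := by
      refine Summable.tsum_le_tsum (fun l => ?_) ?_ (hsum1.add hsum2)
      · have : μ (q i) (t l) - μ (q i') (t l)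
            = (g (p i) (t l) - a (t l)) - (g (p i') (t l) - a (t l)) := by
          simp only [hqdef, hg]; ring
        rw [this]
        exact abs_sub _ _
      · exact (((hsum _).of_abs.sub (hsum _).of_abs).abs).comp_injective htmono.injective
    rw [Summable.tsum_add hsum1 hsum2] at hle
    have hpow : ∀ n, i₀ ≤ n → (1/2 : ℝ) ^ n ≤ (1/2) ^ i₀ := fun n hn =>
      pow_le_pow_of_le_one (by norm_num) (by norm_num) hn
    have h1 := hkey i
    have h2 := hkey i'
    have := hpow i hii
    have := hpow i' hii'
    linarith
end

section
/- Let (μₙ) be a uniformly bounded sequence in ℓ¹ (viewed as measures on P(ω)), let S ⊆ ω be infinite, and ε > 0. Then there is an infinite subset N ⊆ S such that for every k ∈ N, the variation of μ_k on N \ {k} is less than ε, i.e., Σ_{j∈N, j≠k} |μ_k(j)| < ε. -/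
open Set

/-- tsum over a subset is at most tsum over a superset, for nonneg summable functions. -/
lemma rosenthal_tsum_mono {f : ℕ → ℝ} (hf : Summable f) (h0 : ∀ x, 0 ≤ f x)
    {A B : Set ℕ} (hAB : A ⊆ B) : (∑' x : A, f x) ≤ ∑' x : B, f x := by
  rw [tsum_subtype, tsum_subtype]
  exact Summable.tsum_le_tsum (fun x => Set.indicator_le_indicator_of_subset hAB h0 x)
    (hf.indicator A) (hf.indicator B)

lemma rosenthal_tsum_le_total {f : ℕ → ℝ} (hf : Summable f) (h0 : ∀ x, 0 ≤ f x)
    (A : Set ℕ) : (∑' x : A, f x) ≤ ∑' x, f x := by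
  rw [tsum_subtype]
  exact Summable.tsum_le_tsum (fun x => Set.indicator_le_self' (fun x _ => h0 x) x)
    (hf.indicator A) hf

lemma rosenthal_tsum_compl {f : ℕ → ℝ} (hf : Summable f) (B : Set ℕ) :
    (∑' x, (Bᶜ).indicator f x) = (∑' x, f x) - ∑' x : B, f x := by
  rw [tsum_subtype, Set.indicator_compl]
  simpa using Summable.tsum_sub hf (hf.indicator B)

/-- The key induction. -/
lemma rosenthal_key (ε : ℝ) (hε : 0 < ε) :
    ∀ m : ℕ, ∀ μ : ℕ → ℕ → ℝ, (∀ n, Summable fun j => |μ n j|) →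
    ∀ C : ℝ, (∀ n, (∑' j, |μ n j|) ≤ C) → C < m * ε →
    ∀ S : Set ℕ, S.Infinite →
    ∃ N : Set ℕ, N ⊆ S ∧ N.Infinite ∧
      ∀ k ∈ N, (∑' j : ↥(N \ {k} : Set ℕ), |μ k j|) < ε := by
  intro m
  induction m with
  | zero =>
    intro μ hsum C hbound hC S hS
    exfalso
    have h0 : (0:ℝ) ≤ ∑' j, |μ 0 j| := tsum_nonneg fun j => abs_nonneg _
    simp only [Nat.cast_zero, zero_mul] at hC
    linarith [hbound 0]
  | succ m ih =>
    intro μ hsum C hbound hC S hS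
    by_cases hcε : C < ε
    · -- base: total mass already below ε
      refine ⟨S, subset_rfl, hS, fun k _ => ?_⟩
      calc (∑' j : ↥(S \ {k} : Set ℕ), |μ k j|)
          ≤ ∑' j, |μ k j| := rosenthal_tsum_le_total (hsum k) (fun x => abs_nonneg _) _
        _ ≤ C := hbound k
        _ < ε := hcε
    push_neg at hcε
    -- injective enumeration of part of S
    set g : ℕ → ℕ := fun n => ((Set.Infinite.natEmbedding S hS) n : ℕ) with hg
    have hginj : Function.Injective g := fun a b hab =>
      (Set.Infinite.natEmbedding S hS).injective (Subtype.val_injective hab)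
    have hgS : ∀ n, g n ∈ S := fun n => ((Set.Infinite.natEmbedding S hS) n).2
    -- disjoint infinite pieces
    set Sj : ℕ → Set ℕ := fun j => Set.range fun i => g (Nat.pair j i) with hSj
    have hSjS : ∀ j, Sj j ⊆ S := by
      rintro j x ⟨i, rfl⟩; exact hgS _
    have hSjinf : ∀ j, (Sj j).Infinite := by
      intro j
      exact Set.infinite_range_of_injective (fun a b hab => by
        have := hginj hab
        exact (Nat.pair_eq_pair.mp this).2)
    have hmem : ∀ j n, g n ∈ Sj j ↔ ∃ i, n = Nat.pair j i := by
      intro j n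
      constructor
      · rintro ⟨i, hi⟩
        have := hginj hi
        exact ⟨i, this.symm⟩
      · rintro ⟨i, rfl⟩; exact ⟨i, rfl⟩
    by_cases hA : ∃ j, ∀ k ∈ Sj j, (∑' x : ↥(Sj j \ {k} : Set ℕ), |μ k x|) < ε
    · obtain ⟨j, hj⟩ := hA
      exact ⟨Sj j, hSjS j, hSjinf j, hj⟩
    push_neg at hA
    -- choose bad points
    choose k hk hkε using hA
    have hkinj : Function.Injective k := by
      intro a b hab
      obtain ⟨i, hi⟩ := hk a
      obtain ⟨i', hi'⟩ := hk b
      rw [hab] at hi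
      rw [← hi'] at hi
      have := hginj hi
      exact (Nat.pair_eq_pair.mp this).1
    set T : Set ℕ := Set.range k with hT
    have hTS : T ⊆ S := by rintro x ⟨j, rfl⟩; exact hSjS j (hk j)
    have hTinf : T.Infinite := Set.infinite_range_of_injective hkinj
    -- each k j belongs to Sj j and to no other Sj
    have hknotin : ∀ j j', j ≠ j' → k j ∉ Sj j' := by
      intro j j' hne hmem'
      obtain ⟨i, hi⟩ := hk j
      obtain ⟨i', hi'⟩ := hmem'
      rw [← hi] at hi'
      have := hginj hi'
      exact hne ((Nat.pair_eq_pair.mp this).1).symm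
    -- index function
    classical
    -- new measures
    set ν : ℕ → ℕ → ℝ := fun n => if h : ∃ j, k j = n then
        ((Sj (h.choose) \ {n})ᶜ).indicator (μ n) else 0 with hν
    have hνle : ∀ n x, |ν n x| ≤ |μ n x| := by
      intro n x
      simp only [hν]
      split
      · rename_i h
        by_cases hx : x ∈ (Sj (h.choose) \ {n})ᶜ
        · rw [Set.indicator_of_mem hx]
        · rw [Set.indicator_of_notMem hx]
          simp only [abs_zero]
          exact abs_nonneg _
      · simp only [Pi.zero_apply, abs_zero]
        exact abs_nonneg _
    have hνsum : ∀ n, Summable fun x => |ν n x| :=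
      fun n => Summable.of_nonneg_of_le (fun x => abs_nonneg _) (hνle n) (hsum n)
    have hνbound : ∀ n, (∑' x, |ν n x|) ≤ C - ε := by
      intro n
      by_cases h : ∃ j, k j = n
      · have hkn : k h.choose = n := h.choose_spec
        set j := h.choose
        have habs : ∀ x, |ν n x| = ((Sj j \ {n})ᶜ).indicator (fun x => |μ n x|) x := by
          intro x
          simp only [hν, dif_pos h]
          by_cases hx : x ∈ (Sj j \ {n})ᶜ
          · rw [Set.indicator_of_mem hx, Set.indicator_of_mem hx]
          · rw [Set.indicator_of_notMem hx, Set.indicator_of_notMem hx, abs_zero]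
        calc (∑' x, |ν n x|) = ∑' x, ((Sj j \ {n})ᶜ).indicator (fun x => |μ n x|) x := by
              exact tsum_congr habs
          _ = (∑' x, |μ n x|) - ∑' x : ↥(Sj j \ {n} : Set ℕ), |μ n x| :=
              rosenthal_tsum_compl (hsum n) _
          _ ≤ C - ε := by
              have h1 := hbound n
              have h2 := hkε j
              rw [hkn] at h2
              linarith
      · simp only [hν, dif_neg h]
        simp only [Pi.zero_apply, abs_zero]
        rw [tsum_zero]
        linarith
    have hCε : C - ε < m * ε := by
      push_cast at hC ⊢
      linarith
    obtain ⟨N, hNT, hNinf, hNν⟩ := ih ν hνsum (C - ε) hνbound hCε T hTinf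
    refine ⟨N, hNT.trans hTS, hNinf, fun a ha => ?_⟩
    -- a = k j for some j; on N \ {a}, ν a = μ a
    obtain ⟨j, rfl⟩ := hNT ha
    have hj : (⟨j, rfl⟩ : ∃ j', k j' = k j).choose = j := by
      have := (⟨j, rfl⟩ : ∃ j', k j' = k j).choose_spec
      exact hkinj this
    have heq : ∀ x : ↥(N \ {k j} : Set ℕ), |μ (k j) (x : ℕ)| = |ν (k j) (x : ℕ)| := by
      rintro ⟨x, hxN, hxne⟩
      have hxT : x ∈ T := hNT hxN
      obtain ⟨j', rfl⟩ := hxT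
      have hjj' : j' ≠ j := fun h => hxne (by rw [h]; exact rfl)
      have hxnot : k j' ∉ Sj j := hknotin j' j hjj'
      have : (k j' : ℕ) ∈ (Sj j \ {k j})ᶜ := by
        intro hmem'
        exact hxnot hmem'.1
      simp only [hν, dif_pos (⟨j, rfl⟩ : ∃ j', k j' = k j), hj]
      rw [Set.indicator_of_mem this]
    calc (∑' x : ↥(N \ {k j} : Set ℕ), |μ (k j) (x : ℕ)|)
        = ∑' x : ↥(N \ {k j} : Set ℕ), |ν (k j) (x : ℕ)| := tsum_congr heq
      _ < ε := hNν (k j) ha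

/-- Rosenthal's lemma for `ℓ¹`-measures: for a uniformly bounded sequence `(μₙ)`
in `ℓ¹`, every infinite `S ⊆ ω` and `ε > 0`, there is an infinite `N ⊆ S` such that
`Σ_{j ∈ N, j ≠ k} |μ_k(j)| < ε` for every `k ∈ N`. -/
theorem stmt3
    (μ : ℕ → ℕ → ℝ)
    (hsum : ∀ n, Summable fun j => |μ n j|)
    (C : ℝ) (hbound : ∀ n, ∑' j, |μ n j| ≤ C)
    (S : Set ℕ) (hS : S.Infinite) (ε : ℝ) (hε : 0 < ε) :
    ∃ N : Set ℕ, N ⊆ S ∧ N.Infinite ∧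
      ∀ k ∈ N, (∑' j : ↥(N \ {k} : Set ℕ), |μ k j|) < ε := by
  obtain ⟨m, hm⟩ := exists_nat_gt (C / ε)
  have hC : C < m * ε := by
    have := (div_lt_iff₀ hε).mp hm
    linarith
  exact rosenthal_key ε hε m μ hsum C hbound hC S hS
end

section
/- Let 𝔅 be a subalgebra of P(ω), D ⊆ ω, and 𝔠 a subalgebra of the algebra generated by 𝔅 ∪ P(D). Let (μₙ) be a sequence in ℓ¹ (viewed as finitely additive measures on P(ω)) such that (μₙ(B)) converges for every B ∈ 𝔅 and |μₙ|(D) ≤ ε for all n, where ε > 0. Then any two cluster points μ′, μ″ of {μₙ} in the topology of pointwise convergence on 𝔠 satisfy ‖μ′ − μ″‖_𝔠 ≤ 6ε. -/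
open Filter MeasureTheory

/-- The finitely additive measure on `𝒫(ω)` associated to an `ℓ¹` element. -/
noncomputable def l1Meas (x : ℕ → ℝ) (B : Set ℕ) : ℝ := ∑' j : B, x j

/-- `ν` is a cluster point of the sequence `(l1Meas (μ n))` in the topology of pointwise
convergence on members of the family `𝔄`. -/
def IsClusterPtOn (μ : ℕ → ℕ → ℝ) (𝔄 : Set (Set ℕ)) (ν : Set ℕ → ℝ) : Prop :=
  ∀ ε > (0 : ℝ), ∀ F : Finset (Set ℕ), ↑F ⊆ 𝔄 →
    {n : ℕ | ∀ B ∈ F, |l1Meas (μ n) B - ν B| < ε}.Infinite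

/-- Every member of the algebra generated by `𝔅 ∪ 𝒫(D)` differs from a member of `𝔅`
only inside `D`. -/
lemma exists_approx {𝔅 : Set (Set ℕ)} (h𝔅 : IsSetAlgebra 𝔅) {D : Set ℕ} {B : Set ℕ}
    (hB : B ∈ generateSetAlgebra (𝔅 ∪ {E : Set ℕ | E ⊆ D})) :
    ∃ B₀ ∈ 𝔅, (B \ B₀) ∪ (B₀ \ B) ⊆ D := by
  induction hB with
  | base E hE =>
    rcases hE with h | h
    · exact ⟨E, h, by simp⟩
    · exact ⟨∅, h𝔅.empty_mem, by simpa using h⟩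
  | empty => exact ⟨∅, h𝔅.empty_mem, by simp⟩
  | compl E _ ih =>
    obtain ⟨B₀, hB₀, hsub⟩ := ih
    refine ⟨B₀ᶜ, h𝔅.compl_mem hB₀, ?_⟩
    intro x hx
    apply hsub
    rcases hx with ⟨hx1, hx2⟩ | ⟨hx1, hx2⟩
    · exact Or.inr ⟨by simpa using hx2, by simpa using hx1⟩
    · exact Or.inl ⟨by simpa using hx2, by simpa using hx1⟩
  | union E F _ _ ihE ihF =>
    obtain ⟨B₀, hB₀, hsub⟩ := ihE
    obtain ⟨B₁, hB₁, hsub'⟩ := ihF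
    refine ⟨B₀ ∪ B₁, h𝔅.union_mem hB₀ hB₁, ?_⟩
    intro x hx
    rcases hx with ⟨hx1, hx2⟩ | ⟨hx1, hx2⟩
    · simp only [Set.mem_union, not_or] at hx1 hx2
      rcases hx1 with h | h
      · exact hsub (Or.inl ⟨h, hx2.1⟩)
      · exact hsub' (Or.inl ⟨h, hx2.2⟩)
    · simp only [Set.mem_union, not_or] at hx1 hx2
      rcases hx1 with h | h
      · exact hsub (Or.inr ⟨h, hx2.1⟩)
      · exact hsub' (Or.inr ⟨h, hx2.2⟩)

lemma meas_diff_le {x : ℕ → ℝ} (hx : Summable fun j => |x j|) {B B₀ D : Set ℕ}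
    (h : (B \ B₀) ∪ (B₀ \ B) ⊆ D) :
    |l1Meas x B - l1Meas x B₀| ≤ ∑' j : D, |x j| := by
  have hx' : Summable x := by
    rwa [← summable_abs_iff]
  have hsB : Summable (B.indicator x) := hx'.indicator B
  have hsB₀ : Summable (B₀.indicator x) := hx'.indicator B₀
  have hpt : ∀ j, |B.indicator x j - B₀.indicator x j| ≤ D.indicator (fun j => |x j|) j := by
    intro j
    by_cases h1 : j ∈ B <;> by_cases h2 : j ∈ B₀
    · simp [Set.indicator_of_mem h1, Set.indicator_of_mem h2]
      exact Set.indicator_nonneg (fun j _ => abs_nonneg _) j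
    · have hjD : j ∈ D := h (Or.inl ⟨h1, h2⟩)
      simp [Set.indicator_of_mem h1, Set.indicator_of_notMem h2, Set.indicator_of_mem hjD]
    · have hjD : j ∈ D := h (Or.inr ⟨h2, h1⟩)
      simp [Set.indicator_of_notMem h1, Set.indicator_of_mem h2, Set.indicator_of_mem hjD,
        abs_neg]
    · simp [Set.indicator_of_notMem h1, Set.indicator_of_notMem h2]
      exact Set.indicator_nonneg (fun j _ => abs_nonneg _) j
  have hsD : Summable (D.indicator fun j => |x j|) := hx.indicator D
  have hsdiff : Summable fun j => B.indicator x j - B₀.indicator x j := hsB.sub hsB₀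
  have h1 : l1Meas x B - l1Meas x B₀ = ∑' j, (B.indicator x j - B₀.indicator x j) := by
    unfold l1Meas
    rw [tsum_subtype B x, tsum_subtype B₀ x,
      Summable.tsum_sub (f := B.indicator x) (g := B₀.indicator x) hsB hsB₀]
  rw [h1]
  calc |∑' j, (B.indicator x j - B₀.indicator x j)|
      ≤ ∑' j, |B.indicator x j - B₀.indicator x j| := by
        have hn : Summable fun j => ‖B.indicator x j - B₀.indicator x j‖ := by
          simpa [Real.norm_eq_abs] using hsdiff.abs
        simpa [Real.norm_eq_abs] using
          norm_tsum_le_tsum_norm (f := fun j => B.indicator x j - B₀.indicator x j) hn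
    _ ≤ ∑' j, D.indicator (fun j => |x j|) j := Summable.tsum_le_tsum hpt hsdiff.abs hsD
    _ = ∑' j : D, |x j| := (tsum_subtype D fun j => |x j|).symm

lemma cluster_close {μ : ℕ → ℕ → ℝ} {𝔠 : Set (Set ℕ)} {ν : Set ℕ → ℝ}
    (hν : IsClusterPtOn μ 𝔠 ν) {B B₀ : Set ℕ} (hB : B ∈ 𝔠) {l ε : ℝ}
    (hl : Tendsto (fun n => l1Meas (μ n) B₀) atTop (nhds l))
    (hbd : ∀ n, |l1Meas (μ n) B - l1Meas (μ n) B₀| ≤ ε) :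
    |ν B - l| ≤ ε := by
  refine le_of_forall_pos_le_add fun δ hδ => ?_
  have h1 := hν (δ/2) (by positivity) {B} (by simpa using hB)
  obtain ⟨N, hN⟩ := (Metric.tendsto_atTop.mp hl) (δ/2) (by positivity)
  obtain ⟨n, hn, hnN⟩ := h1.exists_gt N
  have hn1 : |l1Meas (μ n) B - ν B| < δ/2 := hn B (Finset.mem_singleton_self B)
  have hn2 : |l1Meas (μ n) B₀ - l| < δ/2 := by
    have := hN n hnN.le
    rwa [Real.dist_eq] at this
  have := hbd n
  have htri : |ν B - l| ≤ |l1Meas (μ n) B - ν B| + |l1Meas (μ n) B - l1Meas (μ n) B₀|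
      + |l1Meas (μ n) B₀ - l| := by
    have := abs_sub_abs_le_abs_sub (ν B) l
    rw [abs_sub_comm (l1Meas (μ n) B) (ν B)] at hn1 ⊢
    calc |ν B - l| = |(ν B - l1Meas (μ n) B) + (l1Meas (μ n) B - l1Meas (μ n) B₀)
        + (l1Meas (μ n) B₀ - l)| := by ring_nf
      _ ≤ _ := by
        refine (abs_add_le _ _).trans ?_
        gcongr
        exact abs_add_le _ _
  linarith
  
/-- if `𝔅` is a subalgebra of `𝒫(ω)`, `D ⊆ ω`, `𝔠` is a subalgebra of the algebra
generated by `𝔅 ∪ 𝒫(D)`, `(μₙ) ⊆ ℓ¹` converges on every member of `𝔅` and `|μₙ|(D) ≤ ε` for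
all `n`, then any two cluster points `μ′, μ″` of `(μₙ)` in the topology of pointwise
convergence on `𝔠` satisfy `‖μ′ − μ″‖_𝔠 ≤ 6ε`. -/
theorem stmt4
    (𝔅 : Set (Set ℕ)) (h𝔅 : IsSetAlgebra 𝔅)
    (D : Set ℕ)
    (𝔠 : Set (Set ℕ)) (h𝔠 : IsSetAlgebra 𝔠)
    (h𝔠sub : 𝔠 ⊆ generateSetAlgebra (𝔅 ∪ {E : Set ℕ | E ⊆ D}))
    (μ : ℕ → ℕ → ℝ) (hsum : ∀ n, Summable fun j => |μ n j|)
    (hconv : ∀ B ∈ 𝔅, ∃ l : ℝ, Tendsto (fun n => l1Meas (μ n) B) atTop (nhds l))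
    (ε : ℝ) (hε : 0 < ε)
    (hD : ∀ n, (∑' j : D, |μ n j|) ≤ ε)
    (μ' μ'' : Set ℕ → ℝ)
    (hμ' : IsClusterPtOn μ 𝔠 μ') (hμ'' : IsClusterPtOn μ 𝔠 μ'') :
    ∀ B ∈ 𝔠, |μ' B - μ'' B| + |μ' Bᶜ - μ'' Bᶜ| ≤ 6 * ε := by
  intro B hB
  obtain ⟨B₀, hB₀, hsub⟩ := exists_approx h𝔅 (h𝔠sub hB)
  obtain ⟨l, hl⟩ := hconv B₀ hB₀
  obtain ⟨l', hl'⟩ := hconv B₀ᶜ (h𝔅.compl_mem hB₀)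
  have hbd : ∀ n, |l1Meas (μ n) B - l1Meas (μ n) B₀| ≤ ε := fun n =>
    (meas_diff_le (hsum n) hsub).trans (hD n)
  have hsubc : (Bᶜ \ B₀ᶜ) ∪ (B₀ᶜ \ Bᶜ) ⊆ D := by
    intro x hx
    apply hsub
    rcases hx with ⟨hx1, hx2⟩ | ⟨hx1, hx2⟩
    · exact Or.inr ⟨by simpa using hx2, hx1⟩
    · exact Or.inl ⟨by simpa using hx2, hx1⟩
  have hbdc : ∀ n, |l1Meas (μ n) Bᶜ - l1Meas (μ n) B₀ᶜ| ≤ ε := fun n =>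
    (meas_diff_le (hsum n) hsubc).trans (hD n)
  have h1 : |μ' B - l| ≤ ε := cluster_close hμ' hB hl hbd
  have h2 : |μ'' B - l| ≤ ε := cluster_close hμ'' hB hl hbd
  have h3 : |μ' Bᶜ - l'| ≤ ε := cluster_close hμ' (h𝔠.compl_mem hB) hl' hbdc
  have h4 : |μ'' Bᶜ - l'| ≤ ε := cluster_close hμ'' (h𝔠.compl_mem hB) hl' hbdc
  have e1 : |μ' B - μ'' B| ≤ 2 * ε := by
    have := abs_sub (μ' B - l) (μ'' B - l)
    calc |μ' B - μ'' B| = |(μ' B - l) - (μ'' B - l)| := by ring_nf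
      _ ≤ |μ' B - l| + |μ'' B - l| := abs_sub _ _
      _ ≤ 2 * ε := by linarith
  have e2 : |μ' Bᶜ - μ'' Bᶜ| ≤ 2 * ε := by
    calc |μ' Bᶜ - μ'' Bᶜ| = |(μ' Bᶜ - l') - (μ'' Bᶜ - l')| := by ring_nf
      _ ≤ |μ' Bᶜ - l'| + |μ'' Bᶜ - l'| := abs_sub _ _
      _ ≤ 2 * ε := by linarith
  linarith
end

section
/- Let 𝔅 be a subalgebra of P(ω), D ⊆ ω, and 𝔠 a subalgebra of the algebra generated by 𝔅 ∪ P(D). Let (μₙ) be a sequence in ℓ¹ (viewed as finitely additive measures on P(ω)) that converges in variation norm on subsets of D. Then any two cluster points μ′, μ″ of {μₙ} in the topology of pointwise convergence on 𝔠 satisfy ‖μ′ − μ″‖_𝔅 = ‖μ′ − μ″‖_𝔠. -/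
/-!
Every `C ∈ 𝔠` agrees off `D` with some `B ∈ 𝔅`, and then so do `Cᶜ` and `Bᶜ`. Changing a set
inside `D` changes `μₖ(C) - μₘ(C)` by at most `‖μₖ - μₘ‖_D`, which is small for large `k, m`;
approximating `μ′` by some `μₖ` and `μ″` by some `μₘ` with `k, m` large shows that `μ′ - μ″` takes
the same value on `C` as on `B`. Hence the suprema defining both norms run over the same values.
-/

open Filter MeasureTheory

/-- The total variation norm of a finitely additive `ν` restricted to the algebra `𝔄`:
`sup_{B ∈ 𝔄} (|ν(B)| + |ν(Bᶜ)|)`. -/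
noncomputable def varNormOn (𝔄 : Set (Set ℕ)) (ν : Set ℕ → ℝ) : ℝ :=
  ⨆ B : 𝔄, (|ν B| + |ν (↑B : Set ℕ)ᶜ|)

section SetAlgebra

variable {α : Type*} {s t D : Set α}

lemma compl_sdiff_eq_of_sdiff_eq (h : s \ D = t \ D) : sᶜ \ D = tᶜ \ D := by
  rw [Set.sdiff_eq, Set.sdiff_eq, ← Set.compl_union, ← Set.compl_union, ← Set.sdiff_union_self,
    h, Set.sdiff_union_self]

lemma exists_sdiff_eq_of_mem_generateSetAlgebra {𝔅 : Set (Set α)} (h𝔅 : IsSetAlgebra 𝔅)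
    {E : Set α} (hE : E ∈ generateSetAlgebra (𝔅 ∪ {E | E ⊆ D})) :
    ∃ B ∈ 𝔅, E \ D = B \ D := by
  induction hE with
  | base s hs =>
    rcases hs with hs | hs
    · exact ⟨s, hs, rfl⟩
    · exact ⟨∅, h𝔅.empty_mem, by rw [Set.sdiff_eq_empty.mpr hs, Set.empty_sdiff]⟩
  | empty => exact ⟨∅, h𝔅.empty_mem, rfl⟩
  | compl s _ ih =>
    obtain ⟨B, hB, hsB⟩ := ih
    exact ⟨Bᶜ, h𝔅.compl_mem hB, compl_sdiff_eq_of_sdiff_eq hsB⟩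
  | union s t _ _ ihs iht =>
    obtain ⟨B, hB, hsB⟩ := ihs
    obtain ⟨C, hC, htC⟩ := iht
    exact ⟨B ∪ C, h𝔅.union_mem hB hC, by
      rw [Set.union_sdiff_distrib, Set.union_sdiff_distrib, hsB, htC]⟩

lemma abs_indicator_sub_indicator_le_of_sdiff_eq {g : α → ℝ} (h : s \ D = t \ D) (j : α) :
    |s.indicator g j - t.indicator g j| ≤ D.indicator (fun i => |g i|) j := by
  classical
  by_cases hjD : j ∈ D
  · rw [Set.indicator_of_mem hjD]
    by_cases hs : j ∈ s <;> by_cases ht : j ∈ t <;> simp [hs, ht]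
  · have hst : j ∈ s ↔ j ∈ t := by
      simpa [hjD] using Set.ext_iff.mp h j
    simp [Set.indicator_apply, hst, hjD]

end SetAlgebra

lemma l1Meas_eq_tsum_indicator (x : ℕ → ℝ) (B : Set ℕ) :
    l1Meas x B = ∑' j, B.indicator x j :=
  tsum_subtype B x

lemma l1Meas_sub {x y : ℕ → ℝ} (hx : Summable x) (hy : Summable y) (B : Set ℕ) :
    l1Meas (x - y) B = l1Meas x B - l1Meas y B :=
  (hx.subtype B).tsum_sub (hy.subtype B)

lemma abs_l1Meas_sub_le_of_sdiff_eq {x : ℕ → ℝ} (hx : Summable fun j => |x j|)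
    {B B₀ D : Set ℕ} (h : B \ D = B₀ \ D) :
    |l1Meas x B - l1Meas x B₀| ≤ ∑' j : D, |x j| := by
  have hxs : Summable x := hx.of_abs
  rw [l1Meas_eq_tsum_indicator, l1Meas_eq_tsum_indicator, tsum_subtype D fun j => |x j|,
    ← (hxs.indicator B).tsum_sub (hxs.indicator B₀)]
  have hbound := abs_indicator_sub_indicator_le_of_sdiff_eq (g := x) h
  have hsum : Summable fun j => |B.indicator x j - B₀.indicator x j| :=
    (hx.indicator D).of_nonneg_of_le (fun _ => abs_nonneg _) hbound
  calc |∑' j, (B.indicator x j - B₀.indicator x j)|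
      ≤ ∑' j, |B.indicator x j - B₀.indicator x j| := by
        simpa only [Real.norm_eq_abs] using
          norm_tsum_le_tsum_norm (f := fun j => B.indicator x j - B₀.indicator x j) hsum
    _ ≤ ∑' j, D.indicator (fun i => |x i|) j := hsum.tsum_le_tsum hbound (hx.indicator D)

lemma IsClusterPtOn.exists_ge {μ : ℕ → ℕ → ℝ} {𝔄 : Set (Set ℕ)} {ν : Set ℕ → ℝ}
    (hν : IsClusterPtOn μ 𝔄 ν) {B B₀ : Set ℕ} (hB : B ∈ 𝔄) (hB₀ : B₀ ∈ 𝔄) {ε : ℝ} (hε : 0 < ε)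
    (n₀ : ℕ) :
    ∃ n ≥ n₀, |l1Meas (μ n) B - ν B| < ε ∧ |l1Meas (μ n) B₀ - ν B₀| < ε := by
  classical
  have hF : ↑({B, B₀} : Finset (Set ℕ)) ⊆ 𝔄 := by
    simpa [Set.insert_subset_iff] using ⟨hB, hB₀⟩
  obtain ⟨n, hn, hn₀⟩ := (hν ε hε {B, B₀} hF).exists_gt n₀
  exact ⟨n, hn₀.le, hn B (by simp), hn B₀ (by simp)⟩

lemma IsClusterPtOn.sub_eq_of_sdiff_eq {D : Set ℕ} {𝔠 : Set (Set ℕ)} {μ : ℕ → ℕ → ℝ}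
    (hsum : ∀ n, Summable fun j => |μ n j|)
    (hnormD : ∀ δ > (0 : ℝ), ∃ n₀ : ℕ, ∀ k m : ℕ, n₀ ≤ k → n₀ ≤ m →
      (∑' j : D, |μ k j - μ m j|) < δ)
    {μ' μ'' : Set ℕ → ℝ} (hμ' : IsClusterPtOn μ 𝔠 μ') (hμ'' : IsClusterPtOn μ 𝔠 μ'')
    {B B₀ : Set ℕ} (hB : B ∈ 𝔠) (hB₀ : B₀ ∈ 𝔠) (h : B \ D = B₀ \ D) :
    μ' B - μ'' B = μ' B₀ - μ'' B₀ := by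
  refine eq_of_forall_dist_le fun ε hε => ?_
  have hε5 : 0 < ε / 5 := by positivity
  obtain ⟨n₀, hn₀⟩ := hnormD (ε / 5) hε5
  obtain ⟨k, hk, hkB, hkB₀⟩ := hμ'.exists_ge hB hB₀ hε5 n₀
  obtain ⟨m, hm, hmB, hmB₀⟩ := hμ''.exists_ge hB hB₀ hε5 n₀
  have hkm : Summable fun j => |μ k j - μ m j| :=
    ((hsum k).add (hsum m)).of_nonneg_of_le (fun _ => abs_nonneg _) fun j => abs_sub _ _
  have hD : |l1Meas (μ k - μ m) B - l1Meas (μ k - μ m) B₀| < ε / 5 :=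
    (abs_l1Meas_sub_le_of_sdiff_eq hkm h).trans_lt (hn₀ k m hk hm)
  rw [l1Meas_sub (hsum k).of_abs (hsum m).of_abs, l1Meas_sub (hsum k).of_abs (hsum m).of_abs]
    at hD
  rw [Real.dist_eq, abs_le]
  rw [abs_lt] at hD hkB hkB₀ hmB hmB₀
  constructor <;> linarith

lemma varNormOn_eq_of_subset_of_exists_eq {𝔅 𝔠 : Set (Set ℕ)} {ν : Set ℕ → ℝ} (h𝔅𝔠 : 𝔅 ⊆ 𝔠)
    (h : ∀ C ∈ 𝔠, ∃ B ∈ 𝔅, ν C = ν B ∧ ν Cᶜ = ν Bᶜ) :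
    varNormOn 𝔅 ν = varNormOn 𝔠 ν := by
  show sSup (Set.range _) = sSup (Set.range _)
  congr 1
  apply Set.Subset.antisymm
  · rintro _ ⟨⟨B, hB⟩, rfl⟩
    exact ⟨⟨B, h𝔅𝔠 hB⟩, rfl⟩
  · rintro _ ⟨⟨C, hC⟩, rfl⟩
    obtain ⟨B, hB, hCB, hCBc⟩ := h C hC
    exact ⟨⟨B, hB⟩, by simp only [hCB, hCBc]⟩

/-- if `𝔅` is a subalgebra of `𝒫(ω)`, `D ⊆ ω`, `𝔠` is a subalgebra of the
algebra generated by `𝔅 ∪ 𝒫(D)` (with `𝔅 ⊆ 𝔠`), and `(μₙ) ⊆ ℓ¹` converges in variation norm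
on subsets of `D`, then any two cluster points `μ′, μ″` of `(μₙ)` in the topology of pointwise
convergence on `𝔠` satisfy `‖μ′ − μ″‖_𝔅 = ‖μ′ − μ″‖_𝔠`. -/
theorem stmt5
    (𝔅 : Set (Set ℕ)) (h𝔅 : IsSetAlgebra 𝔅)
    (D : Set ℕ)
    (𝔠 : Set (Set ℕ)) (h𝔠 : IsSetAlgebra 𝔠)
    (h𝔅𝔠 : 𝔅 ⊆ 𝔠)
    (h𝔠sub : 𝔠 ⊆ generateSetAlgebra (𝔅 ∪ {E : Set ℕ | E ⊆ D}))
    (μ : ℕ → ℕ → ℝ) (hsum : ∀ n, Summable fun j => |μ n j|)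
    (hnormD : ∀ δ > (0 : ℝ), ∃ n₀ : ℕ, ∀ k m : ℕ, n₀ ≤ k → n₀ ≤ m →
      (∑' j : D, |μ k j - μ m j|) < δ)
    (μ' μ'' : Set ℕ → ℝ)
    (hμ' : IsClusterPtOn μ 𝔠 μ') (hμ'' : IsClusterPtOn μ 𝔠 μ'') :
    varNormOn 𝔅 (fun B => μ' B - μ'' B) = varNormOn 𝔠 (fun B => μ' B - μ'' B) := by
  refine varNormOn_eq_of_subset_of_exists_eq h𝔅𝔠 fun C hC => ?_
  obtain ⟨B, hB, hCB⟩ := exists_sdiff_eq_of_mem_generateSetAlgebra h𝔅 (h𝔠sub hC)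
  exact ⟨B, hB, hμ'.sub_eq_of_sdiff_eq hsum hnormD hμ'' hC (h𝔅𝔠 hB) hCB,
    hμ'.sub_eq_of_sdiff_eq hsum hnormD hμ'' (h𝔠.compl_mem hC) (h𝔅𝔠 (h𝔅.compl_mem hB))
      (compl_sdiff_eq_of_sdiff_eq hCB)⟩
end

section
/- Let K be a compact Hausdorff space and (μₙ) a bounded sequence in M(K) = C(K)*. If 𝔭 = 𝔠 and the weight of K is less than 𝔠, then every bounded sequence in the dual unit ball M₁(K) with the weak* topology has a convergent subsequence; in particular, M₁(K) is sequentially compact. -/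
open Filter

/-- A family of subsets of `ω` has the strong finite intersection property. -/
def HasSFIP (F : Set (Set ℕ)) : Prop :=
  ∀ G : Finset (Set ℕ), ↑G ⊆ F → (⋂₀ (↑G : Set (Set ℕ)) : Set ℕ).Infinite

/-- A family of subsets of `ω` has an infinite pseudo-intersection. -/
def HasPseudoIntersection (F : Set (Set ℕ)) : Prop :=
  ∃ A : Set ℕ, A.Infinite ∧ ∀ B ∈ F, (A \ B).Finite

/-- The pseudo-intersection number `𝔭`. -/
noncomputable def pseudoIntersectionNumber : Cardinal :=
  sInf {c : Cardinal | ∃ F : Set (Set ℕ),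
    HasSFIP F ∧ ¬ HasPseudoIntersection F ∧ Cardinal.mk F = c}

/-- The weight of a topological space: the least cardinality of a topological basis. -/
noncomputable def topWeight (X : Type*) [TopologicalSpace X] : Cardinal :=
  sInf {c : Cardinal | ∃ B : Set (Set X),
    TopologicalSpace.IsTopologicalBasis B ∧ Cardinal.mk B = c}

/-!
Under `𝔭 = 𝔠`, fewer than `𝔠` sequences with relatively compact ranges in a first countable
space have a common convergent subsequence: take their limits along a nonprincipal ultrafilter;
the sets of indices at which the `i`-th sequence lies in the `k`-th basic neighbourhood of its
limit form a family with the strong finite intersection property of size `< 𝔠 = 𝔭`, and an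
infinite pseudo-intersection of it, enumerated increasingly, is the subsequence.

`C(K)` contains a set `T` of size `≤ max ℵ₀ w(K)` with dense linear span: the monomials in
Urysohn functions of pairs of basic open sets with disjoint closures (Stone–Weierstrass).
Along a common convergent subsequence of the bounded sequences `(μₙ f)`, `f ∈ T`, a weak* cluster
point `ν` of the unit ball (Banach–Alaoglu) is the limit on `T`, and the functions `f` at which
`μ_{φ n} f → ν f` form a closed subspace by equicontinuity, so the convergence holds everywhere.
-/

open Cardinal Set Topology TopologicalSpace

theorem hasPseudoIntersection_of_mk_lt {F : Set (Set ℕ)} (hF : HasSFIP F)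
    (hc : #F < pseudoIntersectionNumber) : HasPseudoIntersection F := by
  by_contra h
  exact (csInf_le' (s := {c | ∃ F : Set (Set ℕ), HasSFIP F ∧ ¬HasPseudoIntersection F ∧ #F = c})
    ⟨F, hF, h, rfl⟩).not_gt hc

theorem hasSFIP_of_subset_sets {l : Filter ℕ} [l.NeBot] (hl : l ≤ cofinite) {F : Set (Set ℕ)}
    (hF : F ⊆ l.sets) : HasSFIP F := fun G hG =>
  have hmem : ⋂₀ (G : Set (Set ℕ)) ∈ l := (sInter_mem G.finite_toSet).mpr fun _ hs => hF (hG hs)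
  frequently_cofinite_iff_infinite.mp ((Eventually.frequently hmem).filter_mono hl)

theorem eventually_nth_mem_of_diff_finite {C s : Set ℕ} (hC : C.Infinite) (hs : (C \ s).Finite) :
    ∀ᶠ n in atTop, Nat.nth (· ∈ C) n ∈ s := by
  have hφ : Tendsto (Nat.nth (· ∈ C)) atTop cofinite :=
    Nat.cofinite_eq_atTop ▸ (Nat.nth_strictMono hC).tendsto_atTop
  filter_upwards [hφ.eventually hs.compl_mem_cofinite] with n hn
  by_contra hns
  exact hn ⟨Nat.nth_mem_of_infinite hC n, hns⟩

theorem exists_strictMono_forall_tendsto_of_mk_lt_continuum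
    (hp : 𝔠 ≤ pseudoIntersectionNumber) {ι : Type} (hι : #ι < 𝔠)
    {X : Type*} [TopologicalSpace X] [FirstCountableTopology X]
    (a : ι → ℕ → X) (s : ι → Set X) (hs : ∀ i, IsCompact (s i)) (has : ∀ i n, a i n ∈ s i) :
    ∃ φ : ℕ → ℕ, StrictMono φ ∧ ∀ i, ∃ x ∈ s i, Tendsto (a i ∘ φ) atTop (𝓝 x) := by
  have hlim : ∀ i, ∃ x ∈ s i, Tendsto (a i) (hyperfilter ℕ) (𝓝 x) := fun i =>
    (hs i).ultrafilter_le_nhds' (.map (a i) (hyperfilter ℕ))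
      (univ_mem' (has i) : a i ⁻¹' s i ∈ hyperfilter ℕ)
  choose x hxs hx using hlim
  choose U hU using fun i => (𝓝 (x i)).exists_antitone_basis
  set F : Set (Set ℕ) := range fun p : ι × ℕ => a p.1 ⁻¹' U p.1 p.2
  have hFsets : F ⊆ (hyperfilter ℕ : Filter ℕ).sets := by
    rintro _ ⟨⟨i, k⟩, rfl⟩
    exact hx i ((hU i).mem k)
  have hFcard : #F < pseudoIntersectionNumber := by
    refine mk_range_le.trans_lt (hp.trans_lt' ?_)
    simpa using mul_lt_of_lt aleph0_le_continuum hι aleph0_lt_continuum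
  obtain ⟨C, hC, hCF⟩ :=
    hasPseudoIntersection_of_mk_lt (hasSFIP_of_subset_sets hyperfilter_le_cofinite hFsets) hFcard
  refine ⟨Nat.nth (· ∈ C), Nat.nth_strictMono hC, fun i => ⟨x i, hxs i, ?_⟩⟩
  exact (hU i).tendsto_right_iff.mpr fun k _ =>
    eventually_nth_mem_of_diff_finite hC (hCF _ ⟨(i, k), rfl⟩)

theorem WeakDual.exists_tendsto_of_tendsto_of_dense_span
    {𝕜 : Type*} [NontriviallyNormedField 𝕜] [ProperSpace 𝕜]
    {E : Type*} [SeminormedAddCommGroup E] [NormedSpace 𝕜 E]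
    {α : Type*} {l : Filter α} [l.NeBot] {μ : α → WeakDual 𝕜 E} {r : ℝ}
    (hμ : ∀ i, ‖WeakDual.toStrongDual (μ i)‖ ≤ r) {T : Set E}
    (hT : Dense (Submodule.span 𝕜 T : Set E)) (hconv : ∀ f ∈ T, ∃ c, Tendsto (μ · f) l (𝓝 c)) :
    ∃ ν : WeakDual 𝕜 E, ‖WeakDual.toStrongDual ν‖ ≤ r ∧ Tendsto μ l (𝓝 ν) := by
  obtain ⟨ν, hνr, hν⟩ := (WeakDual.isCompact_closedBall (0 : StrongDual 𝕜 E) r).exists_mapClusterPt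
    (f := l) (u := μ) (tendsto_principal.mpr (.of_forall fun i => by simpa using hμ i))
  let N : Submodule 𝕜 E :=
    { carrier := {f | Tendsto (μ · f) l (𝓝 (ν f))}
      add_mem' := fun hf hg => by simpa using hf.add hg
      zero_mem' := by simp
      smul_mem' := fun c f hf => by simpa using hf.const_smul c }
  have hTN : T ⊆ N := fun f hf => by
    obtain ⟨c, hc⟩ := hconv f hf
    have hνf : MapClusterPt (ν f) l (μ · f) :=
      hν.continuousAt_comp (WeakBilin.eval_continuous _ f).continuousAt
    rwa [← eq_of_nhds_neBot (ClusterPt.mono hνf hc).neBot] at hc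
  have hequi : Equicontinuous fun i => ⇑(WeakDual.toStrongDual (μ i)) := by
    have := (NormedSpace.equicontinuous_TFAE (WeakDual.toStrongDual ∘ μ)).out 1 5
    exact this.mpr ⟨r, hμ⟩
  have hNclosed : IsClosed (N : Set E) := hequi.isClosed_setOfPred_tendsto ν.continuous
  refine ⟨ν, by simpa using hνr, ?_⟩
  refine (WeakBilin.tendsto_iff_forall_eval_tendsto _ ?_).mpr fun f => ?_
  · exact fun ν₁ ν₂ h => DFunLike.ext _ _ fun f => LinearMap.congr_fun h f
  · exact hNclosed.closure_subset_iff.mpr (Submodule.span_le.mpr hTN) (hT f)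

theorem Submonoid.mk_closure_le_max {M : Type*} [Monoid M] (s : Set M) :
    #(Submonoid.closure s) ≤ max ℵ₀ #s := by
  rw [Submonoid.closure_eq_mrange]
  exact mk_range_le.trans (mk_list_le_max s)

theorem exists_isTopologicalBasis_mk_eq_topWeight (X : Type*) [TopologicalSpace X] :
    ∃ B : Set (Set X), IsTopologicalBasis B ∧ #B = topWeight X :=
  csInf_mem (s := {c | ∃ B : Set (Set X), IsTopologicalBasis B ∧ #B = c})
    ⟨_, _, isTopologicalBasis_opens, rfl⟩

theorem ContinuousMap.exists_separatesPoints_mk_le {K : Type*} [TopologicalSpace K] [T4Space K]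
    {B : Set (Set K)} (hB : IsTopologicalBasis B) :
    ∃ S : Set C(K, ℝ), #S ≤ #B * #B ∧ ∀ ⦃x y⦄, x ≠ y → ∃ g ∈ S, g x ≠ g y := by
  have hury (U V : Set K) : ∃ g : C(K, ℝ),
      Disjoint (closure U) (closure V) → EqOn g 0 (closure U) ∧ EqOn g 1 (closure V) := by
    by_cases h : Disjoint (closure U) (closure V)
    · obtain ⟨g, hg0, hg1, -⟩ :=
        exists_continuous_zero_one_of_isClosed isClosed_closure isClosed_closure h
      exact ⟨g, fun _ => ⟨hg0, hg1⟩⟩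
    · exact ⟨0, fun h' => absurd h' h⟩
  choose g hg using hury
  refine ⟨range fun p : B × B => g p.1 p.2, mk_range_le.trans_eq (by rw [mk_prod, lift_id]),
    fun x y hxy => ?_⟩
  obtain ⟨U, hxU, hU, V, hyV, hV, hUV⟩ := exists_open_nhds_disjoint_closure hxy
  obtain ⟨U', hU'B, hxU', hU'U⟩ := hB.exists_subset_of_mem_open hxU hU
  obtain ⟨V', hV'B, hyV', hV'V⟩ := hB.exists_subset_of_mem_open hyV hV
  have hdisj : Disjoint (closure U') (closure V') :=
    hUV.mono (closure_mono hU'U) (closure_mono hV'V)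
  refine ⟨g U' V', ⟨(⟨U', hU'B⟩, ⟨V', hV'B⟩), rfl⟩, ?_⟩
  rw [(hg _ _ hdisj).1 (subset_closure hxU'), (hg _ _ hdisj).2 (subset_closure hyV')]
  exact zero_ne_one

theorem ContinuousMap.exists_dense_span_mk_le_topWeight (K : Type*) [TopologicalSpace K]
    [CompactSpace K] [T2Space K] :
    ∃ T : Set C(K, ℝ), #T ≤ max ℵ₀ (topWeight K) ∧ Dense (Submodule.span ℝ T : Set C(K, ℝ)) := by
  obtain ⟨B, hB, hBw⟩ := exists_isTopologicalBasis_mk_eq_topWeight K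
  obtain ⟨S, hSB, hS⟩ := exists_separatesPoints_mk_le hB
  refine ⟨Submonoid.closure S, ?_, ?_⟩
  · calc #(Submonoid.closure S) ≤ max ℵ₀ #S := Submonoid.mk_closure_le_max S
      _ ≤ max ℵ₀ (max (max #B #B) ℵ₀) := max_le_max_left _ (hSB.trans (mul_le_max _ _))
      _ = max ℵ₀ (topWeight K) := by rw [← hBw]; simp [max_comm]
  · have hsep : (Algebra.adjoin ℝ S).SeparatesPoints := fun x y hxy => by
      obtain ⟨g, hgS, hg⟩ := hS hxy
      exact ⟨g, ⟨g, Algebra.subset_adjoin hgS, rfl⟩, hg⟩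
    rw [← Algebra.adjoin_eq_span, Subalgebra.coe_toSubmodule, dense_iff_closure_eq,
      ← Subalgebra.topologicalClosure_coe,
      ContinuousMap.subalgebra_topologicalClosure_eq_top_of_separatesPoints _ hsep, Algebra.coe_top]

/-- assume `𝔭 = 𝔠` and let `K` be a compact Hausdorff space of weight `< 𝔠`.
Then every sequence in the dual unit ball `M₁(K) ⊆ C(K)* = M(K)` has a weak*-convergent
subsequence (with limit in the ball); in particular `M₁(K)` is weak* sequentially compact. -/
theorem stmt7
    (hp : pseudoIntersectionNumber = Cardinal.continuum)
    (K : Type) [TopologicalSpace K] [CompactSpace K] [T2Space K]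
    (hw : topWeight K < Cardinal.continuum)
    (μ : ℕ → WeakDual ℝ C(K, ℝ))
    (hμ : ∀ n, ‖WeakDual.toStrongDual (μ n)‖ ≤ 1) :
    ∃ φ : ℕ → ℕ, StrictMono φ ∧ ∃ ν : WeakDual ℝ C(K, ℝ),
      ‖WeakDual.toStrongDual ν‖ ≤ 1 ∧ Tendsto (μ ∘ φ) atTop (nhds ν) := by
  obtain ⟨T, hTw, hT⟩ := ContinuousMap.exists_dense_span_mk_le_topWeight K
  have hbound (f : C(K, ℝ)) (n : ℕ) : μ n f ∈ Metric.closedBall 0 ‖f‖ := by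
    simpa using (WeakDual.toStrongDual (μ n)).le_of_opNorm_le (hμ n) f
  obtain ⟨φ, hφ, hlim⟩ := exists_strictMono_forall_tendsto_of_mk_lt_continuum hp.ge
    (hTw.trans_lt (max_lt aleph0_lt_continuum hw)) (fun (f : T) n => μ n f)
    (fun f => Metric.closedBall 0 ‖(f : C(K, ℝ))‖) (fun _ => isCompact_closedBall _ _)
    (fun f => hbound f)
  obtain ⟨ν, hν, hμν⟩ := WeakDual.exists_tendsto_of_tendsto_of_dense_span (l := atTop)
    (fun n => hμ (φ n)) hT fun f hf => (hlim ⟨f, hf⟩).imp fun _ h => h.2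
  exact ⟨φ, hφ, ν, hν, hμν⟩
end

section
/- Let K be an Eberlein compactum of weight 𝔠, realized as a weakly compact subset of c₀(𝔠). Then there exist pairs of distinct points x_α, y_α ∈ K for α < 𝔠 such that, setting σ_α = (1/2)(δ_{x_α} − δ_{y_α}) ∈ M₁(K), the set Σ = {σ_α : α < 𝔠} ∪ {−σ_α : α < 𝔠} ∪ {0} with the weak* topology is homeomorphic to the one-point compactification 𝔸(𝔠) of a discrete set of cardinality 𝔠, with 0 as the point at infinity. -/
/-!
Every point of `K ⊆ c₀(Γ)` is determined by its coordinates, which are weakly continuous and have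
countable support. If fewer than `𝔠` coordinates separated the points of `K`, then `K` would embed
into a product of fewer than `𝔠` lines and have weight `< 𝔠`. Hence every set of fewer than `𝔠`
coordinates fails to separate two points of `K`, and Zorn's lemma gives `𝔠` pairs `(x_α, y_α)`
whose difference supports `{β | x_α β ≠ y_α β}` are pairwise disjoint. (Supports are countable, so
the union of fewer than `𝔠` of them is still small.)

Disjointness does all the rest. A coordinate `β_α` in the `α`-th difference support is a test
function on which `σ_α` is nonzero and every other `σ_γ` vanishes, so the `±σ_α` are distinct and
nonzero. For `f ∈ C(K)` and `δ > 0`, finitely many open sets `{(x, y) | x β ≠ y β}` cover the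
compact set of pairs with `|f x - f y| ≥ δ`, and each of these open sets contains at most one pair
`(x_α, y_α)`. Hence `σ_α → 0` weak*, and the continuous bijection `𝔸(𝔠) → Σ` sending `∞ ↦ 0` is a
homeomorphism by compactness.
-/

open ZeroAtInftyContinuousMap

open Filter Topology Set Cardinal TopologicalSpace Function
open scoped ZeroAtInfty

universe u

theorem Cardinal.mk_finset_le_max (α : Type u) : #(Finset α) ≤ max ℵ₀ #α := by
  classical
  exact (mk_le_of_surjective List.toFinset_surjective).trans (mk_list_le_max α)

theorem topWeight_le_of_isTopologicalBasis {X : Type u} [TopologicalSpace X] {B : Set (Set X)}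
    (hB : IsTopologicalBasis B) : topWeight X ≤ #B :=
  csInf_le' ⟨B, hB, rfl⟩

theorem topWeight_le_of_isInducing {X ι E : Type u} [TopologicalSpace X] [TopologicalSpace E]
    [SecondCountableTopology E] {j : X → ι → E} (hj : IsInducing j) :
    topWeight X ≤ max ℵ₀ #ι := by
  obtain ⟨b, hbc, -, hb⟩ := exists_countable_basis E
  classical
  let G : Finset (ι × b) → Set (ι → E) := fun t => ⋂ p ∈ t, eval p.1 ⁻¹' p.2
  have hG : IsTopologicalBasis (range G) := by
    refine (isTopologicalBasis_pi fun _ => hb).of_isOpen_of_subset ?_ ?_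
    · rintro _ ⟨t, rfl⟩
      exact isOpen_biInter_finset fun p _ => (hb.isOpen p.2.2).preimage (continuous_apply p.1)
    · rintro _ ⟨U, F, hU, rfl⟩
      refine ⟨F.attach.image fun i : {i // i ∈ F} => (i.1, ⟨U i, hU i i.2⟩), ?_⟩
      ext f
      simp only [G, Finset.mem_image, Finset.mem_attach, mem_iInter, Set.mem_pi]
      aesop
  have hb_le : #b ≤ ℵ₀ := mk_le_aleph0_iff.mpr hbc.to_subtype
  calc topWeight X ≤ #(preimage j '' range G) :=
        topWeight_le_of_isTopologicalBasis (hG.isInducing hj)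
    _ ≤ #(Finset (ι × b)) := mk_image_le.trans mk_range_le
    _ ≤ max ℵ₀ #(ι × b) := mk_finset_le_max _
    _ ≤ max ℵ₀ #ι := by
      rw [mk_prod, lift_id, lift_id]
      refine max_le (le_max_left _ _) ((mul_le_max _ _).trans ?_)
      exact max_le (max_le (le_max_right _ _) (hb_le.trans (le_max_left _ _))) (le_max_left _ _)

def diffSupport {X Γ E : Type*} (v : X → Γ → E) (p : X × X) : Set Γ := {β | v p.1 β ≠ v p.2 β}

section DiffSupport

variable {X Γ E ι : Type*} {v : X → Γ → E}

theorem diffSupport_nonempty {p : X × X} (hv : Injective v) (hp : p.1 ≠ p.2) :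
    (diffSupport v p).Nonempty :=
  Function.ne_iff.mp (hv.ne hp)

variable [TopologicalSpace X] [TopologicalSpace E] [T2Space E]

theorem finite_setOf_mem_of_isCompact (hv : Continuous v) (hinj : Injective v) {P : ι → X × X}
    (hP : Pairwise (Disjoint on (diffSupport v ∘ P))) {C : Set (X × X)} (hC : IsCompact C)
    (hdiag : ∀ z ∈ C, z.1 ≠ z.2) : {a | P a ∈ C}.Finite := by
  have hopen : ∀ β : Γ, IsOpen {w : X × X | β ∈ diffSupport v w} := fun β =>
    isOpen_ne_fun ((continuous_apply β).comp (hv.comp continuous_fst))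
      ((continuous_apply β).comp (hv.comp continuous_snd))
  obtain ⟨t, ht⟩ := hC.elim_finite_subcover _ hopen fun z hz =>
    mem_iUnion.mpr (diffSupport_nonempty hinj (hdiag z hz))
  refine (t.finite_toSet.biUnion (t := fun β => {a | β ∈ diffSupport v (P a)}) fun β _ => ?_).subset
    fun a ha => by simpa using ht ha
  exact Subsingleton.finite fun a ha b hb => hP.eq (not_disjoint_iff.mpr ⟨β, ha, hb⟩)

theorem tendsto_sub_cofinite_zero [CompactSpace X] (hv : Continuous v) (hinj : Injective v)
    {P : ι → X × X} (hP : Pairwise (Disjoint on (diffSupport v ∘ P))) (f : C(X, ℝ)) :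
    Tendsto (fun a => f (P a).1 - f (P a).2) cofinite (𝓝 0) := by
  refine Metric.tendsto_nhds.mpr fun δ hδ => eventually_cofinite.mpr ?_
  have hC : IsClosed {w : X × X | δ ≤ |f w.1 - f w.2|} :=
    isClosed_le continuous_const (by fun_prop)
  refine (finite_setOf_mem_of_isCompact hv hinj hP hC.isCompact fun z hz hz' => ?_).subset
    fun a ha => by simpa [Real.dist_eq] using ha
  simp only [mem_ofPred_eq, hz', sub_self, abs_zero] at hz
  linarith

end DiffSupport

section SmallCoordinateSets

variable {X Γ E ι : Type u} {v : X → Γ → E}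

theorem exists_diffSupport_nonempty_disjoint [TopologicalSpace X] [CompactSpace X]
    [TopologicalSpace E] [T2Space E] [SecondCountableTopology E] (hv : Continuous v)
    (hinj : Injective v) {W : Set Γ} (hW : max ℵ₀ #W < topWeight X) :
    ∃ p : X × X, (diffSupport v p).Nonempty ∧ Disjoint (diffSupport v p) W := by
  by_contra! h
  let j : X → W → E := fun x β => v x β
  have hj : Injective j := by
    intro x y hxy
    by_contra hne
    refine h (x, y) (diffSupport_nonempty hinj hne) (disjoint_left.mpr fun β hβ hβW => hβ ?_)
    exact congrFun hxy ⟨β, hβW⟩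
  have hjc : Continuous j := continuous_pi fun β => (continuous_apply β.1).comp hv
  exact (topWeight_le_of_isInducing (hjc.isClosedEmbedding hj).isInducing).not_gt hW

theorem exists_pairwise_disjoint_diffSupport {κ : Cardinal.{u}} (hκ : ℵ₀ < κ)
    (hcount : ∀ p, (diffSupport v p).Countable)
    (hsep : ∀ W : Set Γ, #W < κ →
      ∃ p : X × X, (diffSupport v p).Nonempty ∧ Disjoint (diffSupport v p) W)
    (hι : #ι ≤ κ) :
    ∃ P : ι → X × X, (∀ a, (diffSupport v (P a)).Nonempty) ∧
      Pairwise (Disjoint on (diffSupport v ∘ P)) := by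
  let S : Set (Set (X × X)) :=
    {F | (∀ p ∈ F, (diffSupport v p).Nonempty) ∧ F.PairwiseDisjoint (diffSupport v)}
  obtain ⟨M, hM⟩ := zorn_subset S fun c hcS hc => by
    refine ⟨⋃₀ c, ⟨fun p ⟨F, hF, hp⟩ => (hcS hF).1 p hp, ?_⟩, fun _ => subset_sUnion_of_mem⟩
    exact (pairwiseDisjoint_sUnion hc.directedOn).mpr fun F hF => (hcS hF).2
  have hMκ : κ ≤ #M := by
    by_contra! hlt
    let W := ⋃ p ∈ M, diffSupport v p
    have hW : #W < κ := by
      refine (mk_biUnion_le _ M).trans_lt (mul_lt_of_lt hκ.le hlt (lt_of_le_of_lt ?_ hκ))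
      exact ciSup_le' fun p => mk_le_aleph0_iff.mpr (hcount p).to_subtype
    obtain ⟨p, hp, hpW⟩ := hsep W hW
    have hpM : p ∉ M := fun hpM =>
      hp.ne_empty (hpW.eq_bot_of_le (subset_biUnion_of_mem (u := diffSupport v) hpM))
    have hins : insert p M ∈ S := by
      refine ⟨forall_mem_insert.mpr ⟨hp, hM.prop.1⟩, hM.prop.2.insert fun q hq _ => ?_⟩
      exact hpW.mono_right (subset_biUnion_of_mem (u := diffSupport v) hq)
    exact hpM (hM.eq_of_subset hins (subset_insert p M) ▸ mem_insert p M)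
  obtain ⟨e⟩ := hι.trans hMκ
  refine ⟨fun a => e a, fun a => hM.prop.1 _ (e a).2, fun a b hab => ?_⟩
  exact hM.prop.2 (e a).2 (e b).2 fun h => hab (e.injective (Subtype.ext h))

end SmallCoordinateSets

theorem Filter.Tendsto.sumElim_cofinite {α β γ : Type*} {f : α → γ} {g : β → γ} {l : Filter γ}
    (hf : Tendsto f cofinite l) (hg : Tendsto g cofinite l) :
    Tendsto (Sum.elim f g) cofinite l := fun U hU => by
  refine ((hf hU).image Sum.inl |>.union ((hg hU).image Sum.inr)).subset ?_
  rintro (a | a) ha <;> simpa using ha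

theorem OnePoint.exists_homeomorph_of_tendsto_cofinite {X E : Type*} [TopologicalSpace X]
    [DiscreteTopology X] [TopologicalSpace E] [T2Space E] {τ : X → E} {p : E}
    (hinj : Injective τ) (hp : ∀ x, τ x ≠ p) (hτ : Tendsto τ cofinite (𝓝 p)) :
    ∃ h : ↥(range τ ∪ {p}) ≃ₜ OnePoint X,
      ((h.symm OnePoint.infty : ↥(range τ ∪ {p})) : E) = p := by
  let Φ : OnePoint X → E := fun o => o.elim p τ
  have hΦ : Continuous Φ := (OnePoint.continuous_iff_from_discrete Φ).mpr hτ
  have hΦinj : Injective Φ := by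
    rintro (_ | x) (_ | y) h
    exacts [rfl, (hp y h.symm).elim, (hp x h).elim, congrArg _ (hinj h)]
  have hrange : range Φ = range τ ∪ {p} := by
    rw [← image_univ, ← OnePoint.range_coe_union_infty, image_union, ← range_comp,
      image_singleton]
    rfl
  exact ⟨((hΦ.isClosedEmbedding hΦinj).isEmbedding.toHomeomorph.trans
    (Homeomorph.setCongr hrange)).symm, rfl⟩

section SignedFamily

variable {ι V : Type*} [AddCommGroup V] [Module ℝ V] [TopologicalSpace V]

@[simp]
theorem WeakDual.zero_apply (x : V) : (0 : WeakDual ℝ V) x = 0 := rfl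

@[simp]
theorem WeakDual.neg_apply (φ : WeakDual ℝ V) (x : V) : (-φ) x = -φ x := rfl

variable {σ : ι → WeakDual ℝ V} {g : ι → V}

theorem sumElim_neg_ne_zero (hself : ∀ a, σ a (g a) ≠ 0) (s : ι ⊕ ι) :
    Sum.elim σ (fun a => -σ a) s ≠ 0 := by
  rcases s with a | a <;> intro h <;> apply hself a
  · simp [show σ a = 0 from h]
  · simp [neg_eq_zero.mp (show -σ a = 0 from h)]

theorem injective_sumElim_neg (hself : ∀ a, σ a (g a) ≠ 0)
    (hother : ∀ a b, a ≠ b → σ b (g a) = 0) : Injective (Sum.elim σ fun a => -σ a) := by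
  rintro (a | a) (b | b) h <;> rcases eq_or_ne a b with rfl | hab <;> try rfl
  all_goals
    have h' := DFunLike.congr_fun h (g a)
    simp only [Sum.elim_inl, Sum.elim_inr, WeakDual.neg_apply] at h'
    try rw [hother a b hab] at h'
    exact (hself a (by linarith)).elim

end SignedFamily

namespace ZeroAtInftyContinuousMap

variable {α : Type*} [TopologicalSpace α]

noncomputable def evalCLM (x : α) : C₀(α, ℝ) →L[ℝ] ℝ :=
  LinearMap.mkContinuous { toFun f := f x, map_add' _ _ := rfl, map_smul' _ _ := rfl } 1
    fun f => by
      rw [one_mul, ← norm_toBCF_eq_norm]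
      exact f.toBCF.norm_coe_le_norm x

theorem countable_support [DiscreteTopology α] {β : Type*} [TopologicalSpace β] [Zero β]
    [T1Space β] [FirstCountableTopology β] (f : C₀(α, β)) : (support f).Countable := by
  have := (cocompact_eq_cofinite α ▸ zero_at_infty f).countable_compl_preimage_ker
  rwa [ker_nhds] at this

end ZeroAtInftyContinuousMap

section WeakCoords

variable {Γ : Type*} [TopologicalSpace Γ]

noncomputable def weakCoords (z : WeakSpace ℝ C₀(Γ, ℝ)) : Γ → ℝ :=
  (toWeakSpace ℝ C₀(Γ, ℝ)).symm z

theorem continuous_weakCoords : Continuous (weakCoords (Γ := Γ)) :=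
  continuous_pi fun β => WeakBilin.eval_continuous _ (evalCLM β)

theorem injective_weakCoords : Injective (weakCoords (Γ := Γ)) :=
  DFunLike.coe_injective.comp (toWeakSpace ℝ C₀(Γ, ℝ)).symm.injective

theorem countable_diffSupport_weakCoords [DiscreteTopology Γ]
    (p : WeakSpace ℝ C₀(Γ, ℝ) × WeakSpace ℝ C₀(Γ, ℝ)) : (diffSupport weakCoords p).Countable := by
  let f : C₀(Γ, ℝ) := (toWeakSpace ℝ C₀(Γ, ℝ)).symm p.1 - (toWeakSpace ℝ C₀(Γ, ℝ)).symm p.2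
  refine f.countable_support.mono fun β hβ => ?_
  simpa [f, sub_eq_zero, diffSupport, weakCoords] using hβ

end WeakCoords

theorem stmt9_general
    (Γ : Type) [TopologicalSpace Γ] [DiscreteTopology Γ]
    (hΓ : Cardinal.mk Γ = Cardinal.continuum)
    (K : Set (WeakSpace ℝ (ZeroAtInftyContinuousMap Γ ℝ)))
    [CompactSpace K]
    (hweight : topWeight K = Cardinal.continuum) :
    ∃ x y : Γ → K, (∀ a : Γ, x a ≠ y a) ∧
      ∀ σ : Γ → WeakDual ℝ C(K, ℝ),
        (σ = fun a => WeakDual.toStrongDual.symm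
          ((1 / 2 : ℝ) • (ContinuousMap.evalCLM ℝ (x a) - ContinuousMap.evalCLM ℝ (y a)))) →
        ∃ h : ↥(Set.range σ ∪ Set.range (fun a => -σ a) ∪ {0}) ≃ₜ OnePoint Γ,
          ((h.symm OnePoint.infty :
            ↥(Set.range σ ∪ Set.range (fun a => -σ a) ∪ {0})) : WeakDual ℝ C(K, ℝ)) = 0 := by
  let v : K → Γ → ℝ := fun z => weakCoords z.1
  have hv : Continuous v := continuous_weakCoords.comp continuous_subtype_val
  have hinj : Injective v := injective_weakCoords.comp Subtype.val_injective
  obtain ⟨P, hPne, hP⟩ := exists_pairwise_disjoint_diffSupport aleph0_lt_continuum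
    (fun p => countable_diffSupport_weakCoords (Prod.map Subtype.val Subtype.val p))
    (fun W hW => exists_diffSupport_nonempty_disjoint hv hinj
      (hweight ▸ max_lt aleph0_lt_continuum hW)) hΓ.le
  refine ⟨fun a => (P a).1, fun a => (P a).2, fun a h => ?_, fun σ hσ => ?_⟩
  · obtain ⟨β, hβ⟩ := hPne a
    exact hβ (congrArg (v · β) h)
  have hσ_apply : ∀ a f, σ a f = 1 / 2 * (f (P a).1 - f (P a).2) := by
    subst hσ
    exact fun a f => rfl
  choose β hβ using hPne
  let g a : C(K, ℝ) := ⟨(v · (β a)), (continuous_apply _).comp hv⟩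
  have hself : ∀ a, σ a (g a) ≠ 0 := fun a => by
    rw [hσ_apply]
    exact mul_ne_zero (by norm_num) (sub_ne_zero.mpr (hβ a))
  have hother : ∀ a b, a ≠ b → σ b (g a) = 0 := fun a b hab => by
    rw [hσ_apply]
    change _ * (v _ (β a) - v _ (β a)) = 0
    rw [not_not.mp (disjoint_left.mp (hP hab) (hβ a)), sub_self, mul_zero]
  have hlim : Tendsto σ cofinite (𝓝 0) :=
    tendsto_iff_forall_eval_tendsto_topDualPairing.mpr fun f => by
      show Tendsto (fun a => σ a f) cofinite (𝓝 0)
      simpa only [hσ_apply, mul_zero] using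
        (tendsto_sub_cofinite_zero hv hinj hP f).const_mul (1 / 2)
  obtain ⟨e⟩ : Nonempty (Γ ≃ Γ ⊕ Γ) := Cardinal.eq.mp <| by
    rw [mk_sum, lift_id, add_eq_self (hΓ ▸ aleph0_lt_continuum.le)]
  obtain ⟨h, hh⟩ := OnePoint.exists_homeomorph_of_tendsto_cofinite
    ((injective_sumElim_neg hself hother).comp e.injective)
    (fun a => sumElim_neg_ne_zero hself (e a))
    ((hlim.sumElim_cofinite (by simpa using hlim.neg)).comp e.injective.tendsto_cofinite)
  have hrange : range (Sum.elim σ (fun a => -σ a) ∘ e) ∪ {0} =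
      range σ ∪ range (fun a => -σ a) ∪ {0} := by
    rw [e.surjective.range_comp, Set.Sum.elim_range]
  exact ⟨(Homeomorph.setCongr hrange).symm.trans h, hh⟩

/-- Let `K` be an Eberlein compactum of weight `𝔠`, realized as a weakly compact
subset of `c₀(𝔠)`.  Then there are pairs of distinct points `x_α ≠ y_α ∈ K` (`α < 𝔠`) such
that, with `σ_α = (1/2)(δ_{x_α} − δ_{y_α}) ∈ M₁(K)`, the set
`Σ = {σ_α} ∪ {−σ_α} ∪ {0}` with the weak* topology is homeomorphic to the one-point
compactification `𝔸(𝔠)` of a discrete set of size `𝔠`, with `0` as the point at infinity. -/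
theorem stmt9
    (Γ : Type) [TopologicalSpace Γ] [DiscreteTopology Γ]
    (hΓ : Cardinal.mk Γ = Cardinal.continuum)
    (K : Set (WeakSpace ℝ (ZeroAtInftyContinuousMap Γ ℝ)))
    (hK : IsCompact K) [CompactSpace K]
    (hweight : topWeight K = Cardinal.continuum) :
    ∃ x y : Γ → K, (∀ a : Γ, x a ≠ y a) ∧
      ∀ σ : Γ → WeakDual ℝ C(K, ℝ),
        (σ = fun a => WeakDual.toStrongDual.symm
          ((1 / 2 : ℝ) • (ContinuousMap.evalCLM ℝ (x a) - ContinuousMap.evalCLM ℝ (y a)))) →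
        ∃ h : ↥(Set.range σ ∪ Set.range (fun a => -σ a) ∪ {0}) ≃ₜ OnePoint Γ,
          ((h.symm OnePoint.infty :
            ↥(Set.range σ ∪ Set.range (fun a => -σ a) ∪ {0})) : WeakDual ℝ C(K, ℝ)) = 0 :=
  stmt9_general Γ hΓ K hweight
end

section
/- Assume 𝔭 = 𝔠, and let X(𝔠) be a twisted sum in a short exact sequence 0 → c₀ → X(𝔠) → c₀(𝔠) → 0 constructed via a countable discrete extension L = M₁(𝔸(𝔠)) ∪ ω in which ω is dense in L and each measure σ_ξ = (1/2)(δ_{x_ξ} − δ_{y_ξ}) satisfies: for every ξ there is f_ξ ∈ X(𝔠) with q(f_ξ) = e_ξ and f_ξ(σ_ξ) = 1/2. Then the quotient map q : X(𝔠) → c₀(𝔠) is c₀(ℵ₁)-singular: there is no isomorphic embedding j : c₀(ℵ₁) → c₀(𝔠) admitting a bounded lifting E : c₀(ℵ₁) → X(𝔠) with q ∘ E = j. -/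
open scoped Classical

open scoped ZeroAtInfty

namespace ZeroAtInftyContinuousMap

section Single

variable {ι : Type*} [TopologicalSpace ι] [DiscreteTopology ι]

noncomputable def single (ξ : ι) : C₀(ι, ℝ) where
  toFun η := if η = ξ then 1 else 0
  continuous_toFun := continuous_of_discreteTopology
  zero_at_infty' := by
    refine tendsto_const_nhds.congr' ?_
    filter_upwards [isCompact_singleton.compl_mem_cocompact] with η (hη : η ≠ ξ)
    simp [hη]

theorem single_apply (ξ η : ι) : single ξ η = if η = ξ then 1 else 0 := rfl

theorem one_le_norm_single (ξ : ι) : 1 ≤ ‖single ξ‖ := by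
  simpa [single_apply] using (single ξ).toBCF.norm_coe_le_norm ξ

theorem norm_sum_single_le_one (S : Finset ι) : ‖∑ ξ ∈ S, single ξ‖ ≤ 1 := by
  rw [← norm_toBCF_eq_norm]
  refine (BoundedContinuousFunction.norm_le zero_le_one).mpr fun η => ?_
  change ‖(∑ ξ ∈ S, single ξ : C₀(ι, ℝ)) η‖ ≤ 1
  have eval_sum : (∑ ξ ∈ S, single ξ : C₀(ι, ℝ)) η = ∑ ξ ∈ S, single ξ η :=
    map_sum (⟨⟨fun f : C₀(ι, ℝ) => f η, rfl⟩, fun _ _ => rfl⟩ : C₀(ι, ℝ) →+ ℝ) _ _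
  simp only [eval_sum, single_apply, Finset.sum_ite_eq]
  split_ifs <;> simp

end Single

end ZeroAtInftyContinuousMap

theorem exists_infinite_fiber_of_uncountable {α β : Type*} [Uncountable α] [Countable β]
    (f : α → β) : ∃ b, (f ⁻¹' {b}).Infinite := by
  by_contra! h
  refine not_countable (α := α) (Set.countable_univ_iff.mp ?_)
  have := Set.countable_iUnion fun b => (h b).countable
  rwa [← Set.preimage_iUnion, Set.iUnion_of_singleton, Set.preimage_univ] at this

theorem ContinuousMap.exists_lt_norm_apply_of_denseRange {L ι E : Type*} [TopologicalSpace L]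
    [CompactSpace L] [SeminormedAddCommGroup E] {d : ι → L} (hd : DenseRange d) (f : C(L, E))
    {r : ℝ} (hr : 0 ≤ r) (hf : r < ‖f‖) : ∃ n, r < ‖f (d n)‖ := by
  obtain ⟨x, hx⟩ : ∃ x, r < ‖f x‖ := by
    by_contra! h
    exact hf.not_ge ((f.norm_le hr).mpr h)
  exact hd.exists_mem_open (isOpen_lt continuous_const f.continuous.norm) ⟨x, hx⟩

section UnitVectorImages

open ZeroAtInftyContinuousMap

variable {ι L : Type*} [TopologicalSpace ι] [DiscreteTopology ι] [TopologicalSpace L]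
  [CompactSpace L]

theorem card_mul_lt_opNorm_of_sign_apply_single_eq (T : C₀(ι, ℝ) →L[ℝ] C(L, ℝ)) (x : L)
    {S : Finset ι} (hS : S.Nonempty) (ε : SignType) {r : ℝ}
    (hsign : ∀ ξ ∈ S, SignType.sign (T (single ξ) x) = ε) (hr : ∀ ξ ∈ S, r < |T (single ξ) x|) :
    S.card * r < ‖T‖ := by
  set v := ∑ ξ ∈ S, single ξ
  have eval_sum : T v x = ∑ ξ ∈ S, T (single ξ) x := by
    rw [map_sum, ContinuousMap.sum_apply]
  calc (S.card : ℝ) * r = ∑ _ξ ∈ S, r := by rw [Finset.sum_const, nsmul_eq_mul]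
    _ < ∑ ξ ∈ S, |T (single ξ) x| := Finset.sum_lt_sum_of_nonempty hS hr
    _ = ε * T v x := by
      rw [eval_sum, Finset.mul_sum]
      refine Finset.sum_congr rfl fun ξ hξ => ?_
      rw [← hsign ξ hξ, sign_mul_self]
    _ ≤ |T v x| := by cases ε <;> simp [le_abs_self, neg_le_abs]
    _ ≤ ‖T v‖ := (T v).norm_coe_le_norm x
    _ ≤ ‖T‖ * ‖v‖ := T.le_opNorm v
    _ ≤ ‖T‖ := mul_le_of_le_one_right (norm_nonneg T) (norm_sum_single_le_one S)

theorem exists_norm_apply_single_le [Uncountable ι] {ω : Type*} [Countable ω] {d : ω → L}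
    (hd : DenseRange d) (T : C₀(ι, ℝ) →L[ℝ] C(L, ℝ)) {r : ℝ} (hr : 0 < r) :
    ∃ ξ, ‖T (single ξ)‖ ≤ r := by
  by_contra! hT
  choose n hn using fun ξ => (T (single ξ)).exists_lt_norm_apply_of_denseRange hd hr.le (hT ξ)
  obtain ⟨⟨k, ε⟩, hfiber⟩ := exists_infinite_fiber_of_uncountable
    fun ξ => (n ξ, SignType.sign (T (single ξ) (d (n ξ))))
  obtain ⟨m, hm⟩ := exists_nat_gt (‖T‖ / r)
  obtain ⟨S, hSfiber, hScard⟩ := hfiber.exists_subset_card_eq (m + 1)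
  have hS : S.Nonempty := Finset.card_pos.mp (by omega)
  have hmem (ξ) (hξ : ξ ∈ S) : n ξ = k ∧ SignType.sign (T (single ξ) (d k)) = ε := by
    obtain ⟨rfl, hε⟩ := Prod.ext_iff.mp (hSfiber hξ)
    exact ⟨rfl, hε⟩
  have hlarge := card_mul_lt_opNorm_of_sign_apply_single_eq T (d k) hS ε
    (fun ξ hξ => (hmem ξ hξ).2) fun ξ hξ => (hmem ξ hξ).1 ▸ hn ξ
  rw [div_lt_iff₀ hr] at hm
  rw [hScard, Nat.cast_succ] at hlarge
  linarith

end UnitVectorImages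

theorem stmt16_general
    (κ : Type) [TopologicalSpace κ]
    (ι₁ : Type) [TopologicalSpace ι₁] [DiscreteTopology ι₁]
    (hι₁ : Cardinal.mk ι₁ = Cardinal.aleph 1)
    (L : Type) [TopologicalSpace L] [CompactSpace L]
    (d : ℕ → L) (hdense : DenseRange d)
    (Xs : Submodule ℝ C(L, ℝ))
    (q : ↥Xs →L[ℝ] ZeroAtInftyContinuousMap κ ℝ) :
    ¬ ∃ (j : ZeroAtInftyContinuousMap ι₁ ℝ →L[ℝ] ZeroAtInftyContinuousMap κ ℝ)
        (E : ZeroAtInftyContinuousMap ι₁ ℝ →L[ℝ] ↥Xs),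
        (∃ c > (0 : ℝ), ∀ g : ZeroAtInftyContinuousMap ι₁ ℝ, c * ‖g‖ ≤ ‖j g‖) ∧
        q.comp E = j := by
  rintro ⟨j, E, ⟨c, hc, hj⟩, rfl⟩
  have : Uncountable ι₁ := by
    rw [← Cardinal.aleph0_lt_mk_iff, hι₁]
    exact Cardinal.aleph0_lt_aleph_one
  -- `q` is continuous for the subspace topology of `Xs`, which is not reducibly the one of its
  -- norm, so the instance search cannot form `‖q‖`.
  obtain ⟨δ, hδ, hq⟩ : ∃ δ > 0, ∀ x : Xs, ‖(x : C(L, ℝ))‖ < δ → ‖q x‖ < c := by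
    have hq0 := q.continuous.tendsto 0
    rw [map_zero, nhds_subtype] at hq0
    simpa using ((Metric.nhds_basis_ball.comap _).tendsto_iff Metric.nhds_basis_ball).mp hq0 c hc
  obtain ⟨ξ, hξ⟩ := exists_norm_apply_single_le hdense (Xs.subtypeL ∘L E) (half_pos hδ)
  have hlarge : c ≤ ‖q (E (.single ξ))‖ :=
    calc c ≤ c * ‖(.single ξ : C₀(ι₁, ℝ))‖ :=
        le_mul_of_one_le_right hc.le (ZeroAtInftyContinuousMap.one_le_norm_single ξ)
      _ ≤ ‖q (E (.single ξ))‖ := hj _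
  exact (hq _ (hξ.trans_lt (half_lt_self hδ))).not_ge hlarge

/-- assume `𝔭 = 𝔠`.  Let `X(𝔠)` be the twisted sum in
`0 → c₀ → X(𝔠) → c₀(𝔠) → 0` arising from a countable discrete extension
`L = M₁(𝔸(𝔠)) ∪ ω` in which `ω` is dense in `L`, and suppose that for each `ξ` there is
`f_ξ ∈ X(𝔠)` with `q f_ξ = e_ξ` and `f_ξ(σ_ξ) = 1/2`.  Then the quotient map
`q : X(𝔠) → c₀(𝔠)` is `c₀(ℵ₁)`-singular: no isomorphic embedding
`j : c₀(ℵ₁) → c₀(𝔠)` admits a bounded lifting `E : c₀(ℵ₁) → X(𝔠)` with `q ∘ E = j`. -/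
theorem stmt16
    (hp : pseudoIntersectionNumber = Cardinal.continuum)
    (κ : Type) [TopologicalSpace κ] [DiscreteTopology κ]
    (hκ : Cardinal.mk κ = Cardinal.continuum)
    (ι₁ : Type) [TopologicalSpace ι₁] [DiscreteTopology ι₁]
    (hι₁ : Cardinal.mk ι₁ = Cardinal.aleph 1)
    (L : Type) [TopologicalSpace L] [CompactSpace L] [T2Space L]
    (d : ℕ → L) (hdense : DenseRange d)
    (σ : κ → L)
    (Xs : Submodule ℝ C(L, ℝ)) (hXc : IsClosed (Xs : Set C(L, ℝ)))
    (q : ↥Xs →L[ℝ] ZeroAtInftyContinuousMap κ ℝ)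
    (hqsurj : Function.Surjective q)
    (hlift : ∀ ξ : κ, ∃ f : ↥Xs,
      (∀ η : κ, q f η = if η = ξ then (1 : ℝ) else 0) ∧ (f : C(L, ℝ)) (σ ξ) = 1 / 2) :
    ¬ ∃ (j : ZeroAtInftyContinuousMap ι₁ ℝ →L[ℝ] ZeroAtInftyContinuousMap κ ℝ)
        (E : ZeroAtInftyContinuousMap ι₁ ℝ →L[ℝ] ↥Xs),
        (∃ c > (0 : ℝ), ∀ g : ZeroAtInftyContinuousMap ι₁ ℝ, c * ‖g‖ ≤ ‖j g‖) ∧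
        q.comp E = j :=
  stmt16_general κ ι₁ hι₁ L d hdense Xs q
end
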